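/- arXiv:2008.06068 — 9 statements merged into one kernel-verified Lean document; each statement's English description precedes it below -/
import Mathlib

section
/- Let n ≥ 1 and let W be a real n×n matrix that is symmetric, has nonnegative entries, and zero diagonal (the weight matrix of a weighted graph on vertex set Fin n). Let G be the simple graph on Fin n with an edge between distinct i and j iff W i j > 0, let L := diag(W·1) − W be the Laplacian matrix, and let d be the vector with d_i := the number of indices j with W i j > 0. If there exists a real n×n matrix D such that L·D + 2·I = (2·1 − d)·1ᵀ, then G is a tree. -/
/-!
Multiplying `L * D + 2 • 1 = (2 - d) 1ᵀ` on the left by a row vector `x` with `x L = 0` gives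
`2 x = (x ⬝ (2 - d)) 1ᵀ`, so every left null vector of `L` is constant. The indicator of a
connected component is such a vector, hence `G` is connected; the all-ones vector gives
`2 = 2n - ∑ d`, i.e. `G` has `n - 1` edges, and a connected graph on `n` vertices with
`n - 1` edges is a tree.
-/

open Matrix Finset

section

variable {ι R : Type*} [Fintype ι] [DecidableEq ι]

theorem mul_eq_dotProduct_of_vecMul_eq_zero [CommSemiring R] {L D : Matrix ι ι R} {c : R}
    {u : ι → R} (hD : L * D + c • 1 = vecMulVec u fun _ => 1) {x : ι → R} (hx : x ᵥ* L = 0)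
    (i : ι) : c * x i = x ⬝ᵥ u := by
  simpa [vecMul_add, vecMul_smul, ← vecMul_vecMul, hx, vecMul_vecMulVec] using
    congrFun (congrArg (x ᵥ* ·) hD) i

theorem vecMul_diagonal_sum_sub_eq_zero [CommRing R] {W : Matrix ι ι R} (hW : W.IsSymm)
    {x : ι → R} (hx : ∀ i j, W i j ≠ 0 → x i = x j) :
    x ᵥ* (diagonal (fun i => ∑ j, W i j) - W) = 0 := by
  rw [vecMul_sub, sub_eq_zero]
  ext k
  have hterm : ∀ i, x i * W i k = x k * W k i := fun i => by
    rw [← hW.apply k i]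
    by_cases hik : W i k = 0
    · simp [hik]
    · rw [hx i k hik]
  rw [vecMul_diagonal, Finset.mul_sum]
  simp only [vecMul, dotProduct, hterm]

end

theorem SimpleGraph.card_edgeSet_add_one_of_sum_degrees {V : Type*} [Fintype V]
    {G : SimpleGraph V} [DecidableRel G.Adj]
    (h : ∑ v, (G.degree v : ℝ) = 2 * Fintype.card V - 2) :
    Nat.card G.edgeSet + 1 = Nat.card V := by
  classical
  rw [← Nat.cast_sum, sum_degrees_eq_twice_card_edges] at h
  rw [Nat.card_eq_fintype_card, ← edgeFinset_card, Nat.card_eq_fintype_card]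
  have : ((#G.edgeFinset + 1 : ℕ) : ℝ) = Fintype.card V := by push_cast at h ⊢; linarith
  exact_mod_cast this

theorem SimpleGraph.connected_of_forall_adj_eq {V : Type*} [Nonempty V] {G : SimpleGraph V}
    (R : Type*) [Zero R] [One R] [NeZero (1 : R)]
    (h : ∀ x : V → R, (∀ i j, G.Adj i j → x i = x j) → ∀ i j, x i = x j) : G.Connected := by
  classical
  refine ⟨fun a b => by_contra fun hab => ?_⟩
  have hx : ∀ i j, G.Adj i j →
      (if G.Reachable a i then (1 : R) else 0) = if G.Reachable a j then 1 else 0 :=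
    fun i j hij => by
      rw [if_congr ⟨fun h => h.trans hij.reachable, fun h => h.trans hij.symm.reachable⟩ rfl rfl]
  simpa [hab] using h _ hx a b

/-- If the Laplacian matrix `L` of a weighted graph with weight matrix `W` satisfies
`L·D + 2·I = (2·1 − d)·1ᵀ` for some real matrix `D`, then the underlying simple graph
is a tree. -/
theorem bilinear_identity_implies_tree {n : ℕ} (hn : 1 ≤ n)
    (W : Matrix (Fin n) (Fin n) ℝ)
    (hsymm : W.IsSymm) (hnonneg : ∀ i j, 0 ≤ W i j) (hdiag : ∀ i, W i i = 0)
    (G : SimpleGraph (Fin n))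
    (hG : ∀ i j, G.Adj i j ↔ i ≠ j ∧ 0 < W i j)
    (L : Matrix (Fin n) (Fin n) ℝ)
    (hL : L = Matrix.diagonal (fun i => ∑ j, W i j) - W)
    (d : Fin n → ℝ)
    (hd : ∀ i, d i = ((Finset.univ.filter fun j => 0 < W i j).card : ℝ))
    (h : ∃ D : Matrix (Fin n) (Fin n) ℝ,
      L * D + (2 : ℝ) • (1 : Matrix (Fin n) (Fin n) ℝ) =
        Matrix.vecMulVec (fun i => 2 - d i) (fun _ => (1 : ℝ))) :
    G.IsTree := by
  classical
  obtain ⟨D, hD⟩ := h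
  have : Nonempty (Fin n) := ⟨⟨0, hn⟩⟩
  have hker : ∀ x : Fin n → ℝ, (∀ i j, G.Adj i j → x i = x j) → x ᵥ* L = 0 := fun x hx => by
    refine hL ▸ vecMul_diagonal_sum_sub_eq_zero hsymm fun i j hij => ?_
    obtain rfl | hne := eq_or_ne i j
    · rfl
    · exact hx i j ((hG i j).2 ⟨hne, (hnonneg i j).lt_of_ne' hij⟩)
  have hconn : G.Connected := SimpleGraph.connected_of_forall_adj_eq ℝ fun x hx i j => by
    have hi := mul_eq_dotProduct_of_vecMul_eq_zero hD (hker x hx) i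
    have hj := mul_eq_dotProduct_of_vecMul_eq_zero hD (hker x hx) j
    linarith
  have hdeg : ∀ i, d i = G.degree i := fun i => by
    rw [hd, ← SimpleGraph.card_neighborFinset_eq_degree, SimpleGraph.neighborFinset_eq_filter]
    congr 2
    refine Finset.filter_congr fun j _ =>
      ⟨fun hpos => (hG i j).2 ⟨?_, hpos⟩, fun hadj => ((hG i j).1 hadj).2⟩
    rintro rfl
    exact hpos.ne' (hdiag i)
  have hsum : ∑ i, (G.degree i : ℝ) = 2 * Fintype.card (Fin n) - 2 := by
    have h1 := mul_eq_dotProduct_of_vecMul_eq_zero hD (hker 1 fun _ _ _ => rfl) ⟨0, hn⟩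
    simp only [dotProduct, Pi.one_apply, one_mul, Finset.sum_sub_distrib, hdeg, Finset.sum_const,
      Finset.card_univ, nsmul_eq_mul] at h1
    linarith
  exact SimpleGraph.isTree_iff_connected_and_card.2
    ⟨hconn, SimpleGraph.card_edgeSet_add_one_of_sum_degrees hsum⟩
end

section
/- Let n ≥ 1 and let W be a real n×n matrix that is symmetric, has nonnegative entries, and zero diagonal, with Laplacian matrix L := diag(W·1) − W and degree vector d given by d_i := #{j : W i j > 0}. If D and D' are real n×n matrices, each with zero diagonal, and both satisfy L·D + 2·I = (2·1 − d)·1ᵀ and L·D' + 2·I = (2·1 − d)·1ᵀ, then D = D'. (In particular the zero-diagonal solution of this bilinear identity, when it exists, is unique: it is the distance matrix of the weighted tree with reciprocal edge weights.) -/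
open Matrix Finset BigOperators

/-- The zero-diagonal solution `D` of the bilinear identity `L·D + 2·I = (2·1 − d)·1ᵀ`,
when it exists, is unique. -/
theorem bilinear_identity_solution_unique {n : ℕ} (hn : 1 ≤ n)
    (W : Matrix (Fin n) (Fin n) ℝ)
    (hsymm : W.IsSymm) (hnonneg : ∀ i j, 0 ≤ W i j) (hdiag : ∀ i, W i i = 0)
    (L : Matrix (Fin n) (Fin n) ℝ)
    (hL : L = Matrix.diagonal (fun i => ∑ j, W i j) - W)
    (d : Fin n → ℝ)
    (hd : ∀ i, d i = ((Finset.univ.filter fun j => 0 < W i j).card : ℝ))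
    (D D' : Matrix (Fin n) (Fin n) ℝ)
    (hDdiag : ∀ i, D i i = 0) (hD'diag : ∀ i, D' i i = 0)
    (hD : L * D + (2 : ℝ) • (1 : Matrix (Fin n) (Fin n) ℝ) =
      Matrix.vecMulVec (fun i => 2 - d i) (fun _ => (1 : ℝ)))
    (hD' : L * D' + (2 : ℝ) • (1 : Matrix (Fin n) (Fin n) ℝ) =
      Matrix.vecMulVec (fun i => 2 - d i) (fun _ => (1 : ℝ))) :
    D = D' := by
  have hWsym : ∀ a b, W b a = W a b := fun a b => (congrFun (congrFun hsymm a) b : W b a = W a b)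
  have hLab : ∀ a b, L a b = (if a = b then ∑ c, W a c else 0) - W a b := by
    intro a b; rw [hL]; by_cases h : a = b <;> simp [Matrix.diagonal_apply, h]
  have h0 : L * D = L * D' := add_right_cancel (hD.trans hD'.symm)
  ext i j
  by_contra hne
  obtain ⟨x, hxm⟩ : ∃ x : Fin n → ℝ, ∀ m, x m = D m j - D' m j :=
    ⟨fun m => D m j - D' m j, fun m => rfl⟩
  have hxj : x j = 0 := by rw [hxm, hDdiag, hD'diag, sub_zero]
  have hxi : x i ≠ 0 := by rw [hxm]; exact sub_ne_zero.mpr hne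
  have hLx : ∀ k, ∑ m, L k m * x m = 0 := by
    intro k
    have h1 := congrFun (congrFun h0 k) j
    simp only [Matrix.mul_apply] at h1
    calc ∑ m, L k m * x m = ∑ m, L k m * D m j - ∑ m, L k m * D' m j := by
          rw [← Finset.sum_sub_distrib]
          exact Finset.sum_congr rfl fun m _ => by rw [hxm]; ring
      _ = 0 := by rw [h1, sub_self]
  have hrow : ∀ a, ∑ b, L a b * x b = (∑ c, W a c) * x a - ∑ b, W a b * x b := by
    intro a
    simp only [hLab, sub_mul, ite_mul, zero_mul]
    rw [Finset.sum_sub_distrib, Finset.sum_ite_eq Finset.univ a (fun b => (∑ c, W a c) * x b)]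
    simp
  have hswap : ∑ a, ∑ b, W a b * (x b * x b) = ∑ a, ∑ b, W a b * (x a * x a) := by
    rw [Finset.sum_comm]
    exact Finset.sum_congr rfl fun a _ => Finset.sum_congr rfl fun b _ => by rw [hWsym]
  have hAB : ∑ a, ∑ b, W a b * (x a * x a) - ∑ a, ∑ b, W a b * (x a * x b) = 0 := by
    have h1 : ∑ a, x a * ((∑ c, W a c) * x a - ∑ b, W a b * x b) = 0 := by
      refine Finset.sum_eq_zero fun a _ => ?_
      rw [← hrow a, hLx a, mul_zero]
    calc ∑ a, ∑ b, W a b * (x a * x a) - ∑ a, ∑ b, W a b * (x a * x b)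
        = ∑ a, (∑ b, W a b * (x a * x a) - ∑ b, W a b * (x a * x b)) := by
          rw [Finset.sum_sub_distrib]
      _ = ∑ a, x a * ((∑ c, W a c) * x a - ∑ b, W a b * x b) := by
          refine Finset.sum_congr rfl fun a _ => ?_
          have hr : (∑ c, W a c) * x a - ∑ b, W a b * x b
              = ∑ b, (W a b * x a - W a b * x b) := by
            rw [Finset.sum_mul]; rw [← Finset.sum_sub_distrib]
          rw [hr, Finset.mul_sum, ← Finset.sum_sub_distrib]
          exact Finset.sum_congr rfl fun b _ => by ring
      _ = 0 := h1
  have hquad : ∑ a, ∑ b, W a b * (x a - x b) ^ 2 = 0 := by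
    have expand : ∑ a, ∑ b, W a b * (x a - x b) ^ 2
        = (∑ a, ∑ b, W a b * (x a * x a) - ∑ a, ∑ b, W a b * (x a * x b))
          + (∑ a, ∑ b, W a b * (x b * x b) - ∑ a, ∑ b, W a b * (x a * x b)) := by
      rw [← Finset.sum_sub_distrib, ← Finset.sum_sub_distrib, ← Finset.sum_add_distrib]
      refine Finset.sum_congr rfl fun a _ => ?_
      rw [← Finset.sum_sub_distrib, ← Finset.sum_sub_distrib, ← Finset.sum_add_distrib]
      refine Finset.sum_congr rfl fun b _ => ?_
      ring
    rw [expand, hAB, hswap, hAB]; ring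
  have hedge : ∀ a b, 0 < W a b → x a = x b := by
    intro a b hab
    have hnn : ∀ a ∈ Finset.univ, (0:ℝ) ≤ ∑ b, W a b * (x a - x b) ^ 2 := fun a _ =>
      Finset.sum_nonneg fun b _ => mul_nonneg (hnonneg a b) (sq_nonneg _)
    have h1 := (Finset.sum_eq_zero_iff_of_nonneg hnn).mp hquad a (Finset.mem_univ a)
    have hnn2 : ∀ b ∈ Finset.univ, (0:ℝ) ≤ W a b * (x a - x b) ^ 2 := fun b _ =>
      mul_nonneg (hnonneg a b) (sq_nonneg _)
    have h2 := (Finset.sum_eq_zero_iff_of_nonneg hnn2).mp h1 b (Finset.mem_univ b)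
    have h3 : (x a - x b) ^ 2 = 0 := by
      rcases mul_eq_zero.mp h2 with h | h
      · exact absurd h (ne_of_gt hab)
      · exact h
    have h4 := pow_eq_zero_iff (n := 2) (by norm_num) |>.mp h3
    linarith [sub_eq_zero.mp h4]
  obtain ⟨u, hum⟩ : ∃ u : Fin n → ℝ, ∀ k, u k = if x k = x i then 1 else 0 :=
    ⟨fun k => if x k = x i then 1 else 0, fun k => rfl⟩
  have huL : ∀ p, ∑ m, u m * L m p = 0 := by
    intro p
    have hWu : ∑ m, u m * W m p = u p * ∑ m, W p m := by
      rw [Finset.mul_sum]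
      refine Finset.sum_congr rfl fun m _ => ?_
      rcases eq_or_lt_of_le (hnonneg m p) with h | h
      · rw [← h, mul_zero, ← hWsym p m, ← h, mul_zero]
      · have hxmp : x m = x p := hedge m p h
        rw [hum m, hum p, hxmp, hWsym p m]
    simp only [hLab, mul_sub]
    rw [Finset.sum_sub_distrib, hWu]
    have h5 : ∑ m, u m * (if m = p then ∑ c, W m c else 0) = u p * ∑ c, W p c := by
      rw [Finset.sum_eq_single p]
      · simp
      · intro m _ hm; simp [hm]
      · intro h; exact absurd (Finset.mem_univ p) h
    rw [h5, sub_self]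
  have hEntry : ∀ m k, (∑ p, L m p * D p k) + (if m = k then (2:ℝ) else 0) = 2 - d m := by
    intro m k
    have h1 := congrFun (congrFun hD m) k
    simp only [Matrix.add_apply, Matrix.mul_apply, Matrix.smul_apply, Matrix.one_apply,
      Matrix.vecMulVec_apply, smul_eq_mul, mul_ite, mul_one, mul_zero] at h1
    simpa using h1
  have hc : ∀ k, 2 * u k = ∑ m, u m * (2 - d m) := by
    intro k
    have h1 : ∑ m, u m * ((∑ p, L m p * D p k) + (if m = k then (2:ℝ) else 0))
        = ∑ m, u m * (2 - d m) := Finset.sum_congr rfl fun m _ => by rw [hEntry m k]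
    have hdouble : ∑ m, u m * ∑ p, L m p * D p k = 0 := by
      calc ∑ m, u m * ∑ p, L m p * D p k
          = ∑ m, ∑ p, u m * L m p * D p k := by
            refine Finset.sum_congr rfl fun m _ => ?_
            rw [Finset.mul_sum]
            exact Finset.sum_congr rfl fun p _ => by ring
        _ = ∑ p, (∑ m, u m * L m p) * D p k := by
            rw [Finset.sum_comm]
            exact Finset.sum_congr rfl fun p _ => by rw [Finset.sum_mul]
        _ = 0 := Finset.sum_eq_zero fun p _ => by rw [huL p, zero_mul]
    have hite : ∑ m, u m * (if m = k then (2:ℝ) else 0) = 2 * u k := by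
      rw [Finset.sum_eq_single k]
      · simp [mul_comm]
      · intro m _ hm; simp [hm]
      · intro h; exact absurd (Finset.mem_univ k) h
    have h2 : ∑ m, u m * ((∑ p, L m p * D p k) + (if m = k then (2:ℝ) else 0))
        = 2 * u k := by
      calc ∑ m, u m * ((∑ p, L m p * D p k) + (if m = k then (2:ℝ) else 0))
          = ∑ m, (u m * ∑ p, L m p * D p k + u m * (if m = k then (2:ℝ) else 0)) :=
            Finset.sum_congr rfl fun m _ => mul_add _ _ _
        _ = (∑ m, u m * ∑ p, L m p * D p k) + ∑ m, u m * (if m = k then (2:ℝ) else 0) :=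
            Finset.sum_add_distrib
        _ = 2 * u k := by rw [hdouble, hite, zero_add]
    rw [← h2, h1]
  have hui : u i = 1 := by rw [hum]; simp
  have huj : u j = 0 := by
    rw [hum, hxj, if_neg (fun h => hxi h.symm)]
  have hci := hc i
  have hcj := hc j
  rw [hui] at hci
  rw [huj, ← hci] at hcj
  norm_num at hcj
end

section
/- Let n ≥ 1 and let W be a real n×n matrix that is symmetric, has nonnegative entries, and zero diagonal, with Laplacian matrix L := diag(W·1) − W and degree vector d given by d_i := #{j : W i j > 0}. If there exists a real n×n matrix D such that L·D + 2·I = (2·1 − d)·1ᵀ, then the degrees sum to twice the number of edges of a tree: ∑_{i=1}^n d_i = 2(n − 1). -/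
open Matrix Finset BigOperators

/-- If the bilinear identity `L·D + 2·I = (2·1 − d)·1ᵀ` holds for some matrix `D`,
then the degrees sum to `2(n − 1)`. -/
theorem bilinear_identity_degree_sum {n : ℕ} (hn : 1 ≤ n)
    (W : Matrix (Fin n) (Fin n) ℝ)
    (hsymm : W.IsSymm) (hnonneg : ∀ i j, 0 ≤ W i j) (hdiag : ∀ i, W i i = 0)
    (L : Matrix (Fin n) (Fin n) ℝ)
    (hL : L = Matrix.diagonal (fun i => ∑ j, W i j) - W)
    (d : Fin n → ℝ)
    (hd : ∀ i, d i = ((Finset.univ.filter fun j => 0 < W i j).card : ℝ))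
    (h : ∃ D : Matrix (Fin n) (Fin n) ℝ,
      L * D + (2 : ℝ) • (1 : Matrix (Fin n) (Fin n) ℝ) =
        Matrix.vecMulVec (fun i => 2 - d i) (fun _ => (1 : ℝ))) :
    ∑ i, d i = 2 * ((n : ℝ) - 1) := by
  obtain ⟨D, hD⟩ := h
  set j : Fin n := ⟨0, hn⟩
  -- column sums of L are zero
  have hcol : ∀ k, ∑ i, L i k = 0 := by
    intro k
    subst hL
    simp only [Matrix.sub_apply, Matrix.diagonal_apply, Finset.sum_sub_distrib]
    rw [Finset.sum_ite_eq' Finset.univ k (fun i => ∑ j, W i j)]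
    simp only [Finset.mem_univ, if_true]
    have : ∑ i, W i k = ∑ i, W k i := by
      apply Finset.sum_congr rfl
      intro i _
      rw [← hsymm.apply]
    rw [this]
    ring
  have hsum : ∑ i, ((L * D) i j + (2 : ℝ) • (1 : Matrix (Fin n) (Fin n) ℝ) i j)
      = ∑ i, (2 - d i) * 1 := by
    apply Finset.sum_congr rfl
    intro i _
    have := congrFun (congrFun hD i) j
    simpa [Matrix.vecMulVec_apply] using this
  have hLD : ∑ i, (L * D) i j = 0 := by
    simp only [Matrix.mul_apply]
    rw [Finset.sum_comm]
    simp_rw [← Finset.sum_mul]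
    simp [hcol]
  have hId : ∑ i, ((2 : ℝ) • (1 : Matrix (Fin n) (Fin n) ℝ)) i j = 2 := by
    simp [Matrix.one_apply, Finset.sum_ite_eq]
  rw [Finset.sum_add_distrib] at hsum
  simp only [mul_one] at hsum
  rw [hLD, Finset.sum_sub_distrib] at hsum
  have : ∑ i, ((2 : ℝ) • (1 : Matrix (Fin n) (Fin n) ℝ) i j) = 2 := by
    simp [Matrix.one_apply, Finset.sum_ite_eq']
  rw [this] at hsum
  simp only [Finset.sum_const, Finset.card_univ, Fintype.card_fin, nsmul_eq_mul] at hsum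
  linarith
end

section
/- Let n ≥ 1 and let W be a real n×n matrix that is symmetric, has nonnegative entries, and zero diagonal, with Laplacian matrix L := diag(W·1) − W and degree vector d given by d_i := #{j : W i j > 0}. Let G be the simple graph on Fin n with an edge between distinct i and j iff W i j > 0. If there exists a real n×n matrix D such that L·D + 2·I = (2·1 − d)·1ᵀ, then G is connected. -/
open Matrix Finset BigOperators

/-- If the bilinear identity `L·D + 2·I = (2·1 − d)·1ᵀ` holds for some matrix `D`,
then the underlying simple graph is connected. -/
theorem bilinear_identity_implies_connected {n : ℕ} (hn : 1 ≤ n)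
    (W : Matrix (Fin n) (Fin n) ℝ)
    (hsymm : W.IsSymm) (hnonneg : ∀ i j, 0 ≤ W i j) (hdiag : ∀ i, W i i = 0)
    (G : SimpleGraph (Fin n))
    (hG : ∀ i j, G.Adj i j ↔ i ≠ j ∧ 0 < W i j)
    (L : Matrix (Fin n) (Fin n) ℝ)
    (hL : L = Matrix.diagonal (fun i => ∑ j, W i j) - W)
    (d : Fin n → ℝ)
    (hd : ∀ i, d i = ((Finset.univ.filter fun j => 0 < W i j).card : ℝ))
    (h : ∃ D : Matrix (Fin n) (Fin n) ℝ,
      L * D + (2 : ℝ) • (1 : Matrix (Fin n) (Fin n) ℝ) =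
        Matrix.vecMulVec (fun i => 2 - d i) (fun _ => (1 : ℝ))) :
    G.Connected := by
  classical
  obtain ⟨D, hD⟩ := h
  rw [SimpleGraph.connected_iff]
  refine ⟨?_, ⟨⟨0, hn⟩⟩⟩
  intro u v
  by_contra huv
  set x : Fin n → ℝ := fun i => if G.Reachable u i then 1 else 0 with hxdef
  -- x is constant on adjacency
  have hterm : ∀ i k, x i * W i k = x k * W k i := by
    intro i k
    rcases eq_or_lt_of_le (hnonneg i k) with h0 | hpos
    · have h0' : W k i = 0 := by rw [hsymm.apply i k]; exact h0.symm
      rw [← h0, h0', mul_zero, mul_zero]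
    · have hik : i ≠ k := by
        intro e; subst e; rw [hdiag i] at hpos; exact lt_irrefl 0 hpos
      have hadj : G.Adj i k := (hG i k).2 ⟨hik, hpos⟩
      have hx : x i = x k := by
        simp only [hxdef]
        by_cases hr : G.Reachable u i
        · rw [if_pos hr, if_pos (hr.trans hadj.reachable)]
        · rw [if_neg hr, if_neg (fun hr' => hr (hr'.trans hadj.symm.reachable))]
      rw [hx, hsymm.apply i k]
  have key : ∀ k, ∑ i, x i * L i k = 0 := by
    intro k
    have : ∑ i, x i * L i k
        = ∑ i, (x i * (if i = k then ∑ j, W i j else 0) - x i * W i k) := by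
      refine Finset.sum_congr rfl fun i _ => ?_
      rw [hL]
      simp [Matrix.sub_apply, Matrix.diagonal_apply, mul_sub]
    rw [this, Finset.sum_sub_distrib]
    have h1 : ∑ i, x i * (if i = k then ∑ j, W i j else 0) = x k * ∑ j, W k j := by
      rw [Finset.sum_eq_single k]
      · simp
      · intro i _ hik; rw [if_neg hik, mul_zero]
      · intro hk; exact absurd (Finset.mem_univ k) hk
    have h2 : ∑ i, x i * W i k = x k * ∑ j, W k j := by
      rw [Finset.mul_sum]
      exact Finset.sum_congr rfl fun i _ => hterm i k
    rw [h1, h2, sub_self]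
  have hC : ∀ j, 2 * x j = ∑ i, x i * (2 - d i) := by
    intro j
    have hE : ∀ i, (L * D) i j + 2 * (if i = j then (1:ℝ) else 0) = 2 - d i := by
      intro i
      have := congrFun (congrFun hD i) j
      simpa [Matrix.add_apply, Matrix.smul_apply, Matrix.one_apply,
        Matrix.vecMulVec_apply, mul_ite] using this
    have hsum : ∑ i, x i * ((L * D) i j + 2 * (if i = j then (1:ℝ) else 0))
        = ∑ i, x i * (2 - d i) :=
      Finset.sum_congr rfl fun i _ => by rw [hE i]
    have hsplit : ∑ i, x i * ((L * D) i j + 2 * (if i = j then (1:ℝ) else 0))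
        = (∑ i, x i * (L * D) i j) + ∑ i, x i * (2 * (if i = j then (1:ℝ) else 0)) := by
      rw [← Finset.sum_add_distrib]
      exact Finset.sum_congr rfl fun i _ => mul_add _ _ _
    have hzero : ∑ i, x i * (L * D) i j = 0 := by
      have : ∑ i, x i * (L * D) i j = ∑ k, (∑ i, x i * L i k) * D k j := by
        simp only [Matrix.mul_apply, Finset.mul_sum, Finset.sum_mul]
        rw [Finset.sum_comm]
        refine Finset.sum_congr rfl fun k _ => Finset.sum_congr rfl fun i _ => ?_
        ring
      rw [this]
      simp [key]
    have hid : ∑ i, x i * (2 * (if i = j then (1:ℝ) else 0)) = 2 * x j := by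
      rw [Finset.sum_eq_single j]
      · simp [mul_comm]
      · intro i _ hij; rw [if_neg hij, mul_zero, mul_zero]
      · intro hj; exact absurd (Finset.mem_univ j) hj
    rw [hsplit, hzero, zero_add, hid] at hsum
    exact hsum
  have hu : x u = 1 := if_pos (SimpleGraph.Reachable.refl u)
  have hv : x v = 0 := if_neg huv
  have := (hC u).trans (hC v).symm
  rw [hu, hv, mul_one, mul_zero] at this
  norm_num at this
end

section
/- Let n ≥ 1 and let G be a tree (a connected acyclic simple graph) on Fin n. Then the distance matrix of G is a spherical Euclidean distance matrix: there exist points p_1, …, p_n in the Euclidean space ℝ^n, a center c ∈ ℝ^n, and a radius r ≥ 0 such that dist_G(i, j) = ‖p_i − p_j‖² for all i, j, and ‖p_i − c‖ = r for all i. -/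
/-!
Root the tree at a vertex `r` and send `i` to the 0/1 indicator vector of the geodesic interval
`I(r, i)`, the vertex set of the path from `r` to `i`. For the median `m` of `r, i, j` the paths
from `r` to `i` and to `j` share exactly `I(r, m)`, and `m` lies on the path from `i` to `j`, so the
squared distance `|I(r, i)| + |I(r, j)| - 2 |I(r, m)|` of the indicator vectors is
`d(r, i) + d(r, j) - 2 d(r, m) = d(i, j)`. Every 0/1 vector of `ℝⁿ` lies on the sphere of radius
`√n / 2` around `(1/2, …, 1/2)`.
-/

open Finset

namespace SimpleGraph
variable {V : Type*} {G : SimpleGraph V} {a b v w : V}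

lemma Walk.dist_add_dist_eq_of_mem_support {W : G.Walk a b} (hW : W.length = G.dist a b)
    (hv : v ∈ W.support) : G.dist a v + G.dist v b = G.dist a b := by
  classical
  have hsplit : (W.takeUntil v hv).length + (W.dropUntil v hv).length = W.length := by
    rw [← Walk.length_append, W.take_spec hv]
  have := dist_le (W.takeUntil v hv)
  have := dist_le (W.dropUntil v hv)
  have := (W.takeUntil v hv).reachable.dist_triangle_left b
  omega

lemma Walk.IsPath.append_of_support_inter {t : G.Walk a v} {s : G.Walk v b} (ht : t.IsPath)
    (hs : s.IsPath) (hmeet : ∀ x ∈ t.support, x ∈ s.support → x = v) :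
    (t.append s).IsPath := by
  have hnodup : (v :: s.support.tail).Nodup := s.cons_tail_support ▸ hs.support_nodup
  rw [Walk.isPath_def, Walk.support_append, List.nodup_append]
  refine ⟨ht.support_nodup, hnodup.of_cons, fun x hxt y hys hxy => ?_⟩
  subst hxy
  obtain rfl := hmeet x hxt (s.cons_tail_support ▸ List.mem_cons_of_mem v hys)
  exact (List.nodup_cons.1 hnodup).1 hys

lemma IsAcyclic.length_eq_dist_of_isPath (hG : G.IsAcyclic) {P : G.Walk a b} (hP : P.IsPath) :
    P.length = G.dist a b := by
  obtain ⟨Q, hQ, hlen⟩ := P.reachable.exists_path_of_dist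
  have : P = Q := congrArg Subtype.val ((hG.subsingleton_path a b).elim ⟨P, hP⟩ ⟨Q, hQ⟩)
  rw [this, hlen]

lemma IsTree.mem_support_iff_dist_add_dist_eq (hG : G.IsTree) {P : G.Walk a b}
    (hP : P.IsPath) : v ∈ P.support ↔ G.dist a v + G.dist v b = G.dist a b := by
  refine ⟨(P.dist_add_dist_eq_of_mem_support (hG.isAcyclic.length_eq_dist_of_isPath hP) ·), ?_⟩
  intro h
  obtain ⟨t, -, ht⟩ := hG.connected.exists_path_of_dist a v
  obtain ⟨s, -, hs⟩ := hG.connected.exists_path_of_dist v b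
  have hts : (t.append s).IsPath := by
    apply Walk.isPath_of_length_eq_dist
    rw [Walk.length_append, ht, hs, h]
  rw [(hG.existsUnique_path a b).unique hP hts, Walk.mem_support_append_iff]
  exact Or.inr s.start_mem_support

section Interval

variable [Fintype V]

noncomputable def interval (G : SimpleGraph V) (a b : V) : Finset V :=
  {v | G.dist a v + G.dist v b = G.dist a b}

@[simp]
lemma mem_interval : v ∈ G.interval a b ↔ G.dist a v + G.dist v b = G.dist a b := by
  simp [interval]

lemma Connected.interval_subset_interval (hG : G.Connected) (hv : v ∈ G.interval a b) :
    G.interval a v ⊆ G.interval a b := fun w hw => by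
  rw [mem_interval] at *
  have := hG.dist_triangle (u := w) (v := v) (w := b)
  have := hG.dist_triangle (u := a) (v := w) (w := b)
  omega

lemma IsTree.interval_eq_support_toFinset [DecidableEq V] (hG : G.IsTree) {P : G.Walk a b}
    (hP : P.IsPath) : G.interval a b = P.support.toFinset := by
  ext v
  rw [mem_interval, List.mem_toFinset, hG.mem_support_iff_dist_add_dist_eq hP]

lemma IsTree.card_interval (hG : G.IsTree) (a b : V) : #(G.interval a b) = G.dist a b + 1 := by
  classical
  obtain ⟨P, hP, hlen⟩ := hG.connected.exists_path_of_dist a b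
  rw [hG.interval_eq_support_toFinset hP, List.toFinset_card_of_nodup hP.support_nodup,
    Walk.length_support, hlen]

/-- In a tree the interval `I(a, b)` is a path, ordered by the distance from `a`. -/
lemma IsTree.mem_interval_of_dist_le (hG : G.IsTree) (hv : v ∈ G.interval a b)
    (hw : w ∈ G.interval a b) (hvw : G.dist a v ≤ G.dist a w) : v ∈ G.interval a w := by
  classical
  obtain ⟨P, hP, -⟩ := hG.connected.exists_path_of_dist a b
  have havb := mem_interval.1 hv
  have hawb := mem_interval.1 hw
  rw [mem_interval, ← hG.mem_support_iff_dist_add_dist_eq hP] at hv hw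
  rw [← P.take_spec hw, Walk.mem_support_append_iff] at hv
  rcases hv with hv | hv
  · exact mem_interval.2
      ((hG.mem_support_iff_dist_add_dist_eq (hP.takeUntil hw)).1 hv)
  · have hwvb := (hG.mem_support_iff_dist_add_dist_eq (hP.dropUntil hw)).1 hv
    obtain rfl : v = w := (hG.connected.dist_eq_zero_iff.1 (by omega)).symm
    simp

lemma IsTree.exists_median (hG : G.IsTree) (r a b : V) :
    ∃ m, m ∈ G.interval r a ∧ m ∈ G.interval r b ∧ m ∈ G.interval a b := by
  classical
  obtain ⟨m, hm, hmax⟩ := (G.interval r a ∩ G.interval r b).exists_max_image (G.dist r)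
    ⟨r, by simp⟩
  rw [mem_inter, mem_interval, mem_interval] at hm
  obtain ⟨hma, hmb⟩ := hm
  obtain ⟨t, ht, htlen⟩ := hG.connected.exists_path_of_dist a m
  obtain ⟨s, hs, hslen⟩ := hG.connected.exists_path_of_dist m b
  -- a vertex `x` common to both geodesics would be a point of `I(r, a) ∩ I(r, b)` beyond `m`
  have hmeet : ∀ x ∈ t.support, x ∈ s.support → x = m := by
    intro x hxt hxs
    have haxm := t.dist_add_dist_eq_of_mem_support htlen hxt
    have hmxb := s.dist_add_dist_eq_of_mem_support hslen hxs
    have := hG.connected.dist_triangle (u := r) (v := x) (w := a)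
    have := hG.connected.dist_triangle (u := r) (v := x) (w := b)
    have := hG.connected.dist_triangle (u := r) (v := m) (w := x)
    have := G.dist_comm (u := a) (v := x)
    have := G.dist_comm (u := a) (v := m)
    have := G.dist_comm (u := m) (v := x)
    have := hmax x (by simp only [mem_inter, mem_interval]; omega)
    exact (hG.connected.dist_eq_zero_iff.1 (by omega)).symm
  refine ⟨m, mem_interval.2 hma, mem_interval.2 hmb, ?_⟩
  rw [mem_interval, ← htlen, ← hslen, ← Walk.length_append]
  exact hG.isAcyclic.length_eq_dist_of_isPath (ht.append_of_support_inter hs hmeet)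

lemma IsTree.interval_inter_interval_eq [DecidableEq V] (hG : G.IsTree) {r a b m : V}
    (hma : m ∈ G.interval r a) (hmb : m ∈ G.interval r b) (hm : m ∈ G.interval a b) :
    G.interval r a ∩ G.interval r b = G.interval r m := by
  refine Subset.antisymm (fun v hv => ?_) (subset_inter
    (hG.connected.interval_subset_interval hma) (hG.connected.interval_subset_interval hmb))
  obtain ⟨hva, hvb⟩ := mem_inter.1 hv
  rcases le_total (G.dist r v) (G.dist r m) with hvm | hmv
  · exact hG.mem_interval_of_dist_le hva hma hvm
  -- if `m` lay strictly between `r` and `v`, the walk `a → v → b` would be shorter than `d(a, b)`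
  · have hmv' := mem_interval.1 (hG.mem_interval_of_dist_le hma hva hmv)
    rw [mem_interval] at hva hvb hma hmb hm
    have := hG.connected.dist_triangle (u := a) (v := v) (w := b)
    have := G.dist_comm (u := a) (v := v)
    have := G.dist_comm (u := a) (v := m)
    obtain rfl : v = m := (hG.connected.dist_eq_zero_iff.1 (by omega)).symm
    simp

lemma IsTree.dist_add_two_mul_card_inter_interval [DecidableEq V] (hG : G.IsTree) (r a b : V) :
    G.dist a b + 2 * #(G.interval r a ∩ G.interval r b) =
      #(G.interval r a) + #(G.interval r b) := by
  obtain ⟨m, hma, hmb, hm⟩ := hG.exists_median r a b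
  rw [hG.interval_inter_interval_eq hma hmb hm, hG.card_interval, hG.card_interval,
    hG.card_interval]
  rw [mem_interval] at hma hmb hm
  have := G.dist_comm (u := a) (v := m)
  omega

end Interval

end SimpleGraph

section IndicatorVector

variable {ι : Type*} [Fintype ι] [DecidableEq ι]

noncomputable def indicatorVector (s : Finset ι) : EuclideanSpace ℝ ι :=
  WithLp.toLp 2 fun i => if i ∈ s then 1 else 0

lemma norm_indicatorVector_sub_sq (s t : Finset ι) :
    ‖indicatorVector s - indicatorVector t‖ ^ 2 = #s + #t - 2 * #(s ∩ t) := by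
  have hpoint : ∀ i, ((if i ∈ s then 1 else 0) - (if i ∈ t then 1 else 0) : ℝ) ^ 2 =
      (if i ∈ s then 1 else 0) + (if i ∈ t then 1 else 0) - 2 * (if i ∈ s ∩ t then 1 else 0) := by
    intro i
    by_cases his : i ∈ s <;> by_cases hit : i ∈ t <;> norm_num [his, hit]
  simp only [EuclideanSpace.real_norm_sq_eq, indicatorVector, PiLp.sub_apply, hpoint,
    sum_sub_distrib, sum_add_distrib, ← mul_sum, sum_boole, filter_mem_eq_inter, univ_inter]

lemma norm_indicatorVector_sub_half (s : Finset ι) :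
    ‖indicatorVector s - WithLp.toLp 2 (fun _ => 1 / 2)‖ = √(Fintype.card ι) / 2 := by
  have hpoint : ∀ i, ((if i ∈ s then 1 else 0) - 1 / 2 : ℝ) ^ 2 = 1 / 4 := by
    intro i
    by_cases his : i ∈ s <;> norm_num [his]
  rw [← Real.sqrt_sq (norm_nonneg _), EuclideanSpace.real_norm_sq_eq]
  simp only [indicatorVector, PiLp.sub_apply, hpoint, sum_const, card_univ, nsmul_eq_mul]
  rw [Real.sqrt_mul' _ (by norm_num), show (1 / 4 : ℝ) = (1 / 2) ^ 2 by norm_num,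
    Real.sqrt_sq (by norm_num)]
  ring

end IndicatorVector

theorem tree_distance_matrix_spherical_EDM_general {n : ℕ}
    (G : SimpleGraph (Fin n)) (hT : G.IsTree) :
    ∃ (p : Fin n → EuclideanSpace ℝ (Fin n)) (c : EuclideanSpace ℝ (Fin n)) (r : ℝ),
      0 ≤ r ∧ (∀ i j, (G.dist i j : ℝ) = ‖p i - p j‖ ^ 2) ∧ (∀ i, ‖p i - c‖ = r) := by
  obtain ⟨root⟩ := hT.connected.nonempty
  refine ⟨fun i => indicatorVector (G.interval root i), WithLp.toLp 2 fun _ => 1 / 2, √n / 2,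
    by positivity, fun i j => ?_, fun i => ?_⟩
  · have hdist : (G.dist i j : ℝ) + 2 * #(G.interval root i ∩ G.interval root j) =
        #(G.interval root i) + #(G.interval root j) := by
      exact_mod_cast hT.dist_add_two_mul_card_inter_interval root i j
    rw [norm_indicatorVector_sub_sq]
    linarith
  · rw [norm_indicatorVector_sub_half, Fintype.card_fin]

/-- The distance matrix of a tree is a spherical Euclidean distance matrix: there are
points `p i` in `ℝ^n`, all lying on a common sphere of center `c` and radius `r`,
such that the graph distance between `i` and `j` equals the squared Euclidean distance
between `p i` and `p j`. -/
theorem tree_distance_matrix_spherical_EDM {n : ℕ} (hn : 1 ≤ n)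
    (G : SimpleGraph (Fin n)) (hT : G.IsTree) :
    ∃ (p : Fin n → EuclideanSpace ℝ (Fin n)) (c : EuclideanSpace ℝ (Fin n)) (r : ℝ),
      0 ≤ r ∧ (∀ i j, (G.dist i j : ℝ) = ‖p i - p j‖ ^ 2) ∧ (∀ i, ‖p i - c‖ = r) :=
  tree_distance_matrix_spherical_EDM_general G hT
end

section
/- Let n ≥ 1 and let W be a real n×n matrix that is symmetric, has nonnegative entries, and zero diagonal, with Laplacian matrix L := diag(W·1) − W and degree vector d given by d_i := #{j : W i j > 0}. Suppose D is a real symmetric n×n matrix with zero diagonal and nonnegative entries satisfying D i j ≥ 1 / (W i j) whenever W i j > 0, and suppose (L·D + 2·I − (2·1 − d)·1ᵀ) i j = 0 for all indices i < j (indices ordered as elements of Fin n). Then the full matrix identity holds: L·D + 2·I = (2·1 − d)·1ᵀ; in particular the lower-triangular and diagonal entries of the identity are automatic. -/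
open Matrix Finset BigOperators

private lemma quadId {n : ℕ} (W : Matrix (Fin n) (Fin n) ℝ) (hWs : ∀ a b, W a b = W b a)
    (x : Fin n → ℝ) :
    ∑ a, ∑ b, W a b * (x a - x b)^2 =
      2 * ∑ a, x a * ((∑ m, W a m) * x a - ∑ k, W a k * x k) := by
  have key : ∀ a : Fin n, ∑ b, W a b * (x a - x b)^2
      = ((∑ b, W a b * x a^2) + (∑ b, W a b * x b^2)) - ∑ b, 2*(W a b * (x a * x b)) := by
    intro a
    rw [← Finset.sum_add_distrib, ← Finset.sum_sub_distrib]
    exact Finset.sum_congr rfl fun b _ => by ring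
  have mid : ∑ a, ∑ b, W a b * x b^2 = ∑ a, ∑ b, W a b * x a^2 := by
    rw [Finset.sum_comm]
    exact Finset.sum_congr rfl fun b _ => Finset.sum_congr rfl fun a _ => by rw [hWs]
  calc ∑ a, ∑ b, W a b * (x a - x b)^2
      = ∑ a, (((∑ b, W a b * x a^2) + (∑ b, W a b * x b^2)) - ∑ b, 2*(W a b * (x a * x b))) :=
        Finset.sum_congr rfl fun a _ => key a
    _ = ((∑ a, ∑ b, W a b * x a^2) + (∑ a, ∑ b, W a b * x b^2))
          - ∑ a, ∑ b, 2*(W a b * (x a * x b)) := by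
        rw [Finset.sum_sub_distrib, Finset.sum_add_distrib]
    _ = 2 * (∑ a, ∑ b, W a b * x a^2) - 2 * ∑ a, x a * (∑ k, W a k * x k) := by
        rw [mid]
        have h3 : ∑ a, ∑ b, 2*(W a b * (x a * x b)) = 2 * ∑ a, x a * (∑ k, W a k * x k) := by
          rw [Finset.mul_sum Finset.univ (fun a => x a * (∑ k, W a k * x k)) (2:ℝ)]
          refine Finset.sum_congr rfl fun a _ => ?_
          rw [Finset.mul_sum Finset.univ (fun k => W a k * x k) (x a),
              Finset.mul_sum Finset.univ (fun k => x a * (W a k * x k)) (2:ℝ)]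
          exact Finset.sum_congr rfl fun b _ => by ring
        rw [h3]; ring
    _ = 2 * ∑ a, x a * ((∑ m, W a m) * x a - ∑ k, W a k * x k) := by
        have h4 : ∀ a : Fin n, ∑ b, W a b * x a^2 = (∑ m, W a m) * x a^2 := fun a =>
          (Finset.sum_mul Finset.univ (fun m => W a m) (x a^2)).symm
        rw [Finset.mul_sum Finset.univ (fun a => ∑ b, W a b * x a^2) (2:ℝ),
            Finset.mul_sum Finset.univ (fun a => x a * ((∑ m, W a m) * x a - ∑ k, W a k * x k)) (2:ℝ),
            Finset.mul_sum Finset.univ (fun a => x a * (∑ k, W a k * x k)) (2:ℝ),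
            ← Finset.sum_sub_distrib]
        refine Finset.sum_congr rfl fun a _ => ?_
        rw [h4]; ring

private lemma quad_nonneg {n : ℕ} (W : Matrix (Fin n) (Fin n) ℝ) (hWs : ∀ a b, W a b = W b a)
    (hWnn : ∀ a b, 0 ≤ W a b) (x : Fin n → ℝ) :
    0 ≤ ∑ a, x a * ((∑ m, W a m) * x a - ∑ k, W a k * x k) := by
  have h := quadId W hWs x
  have hnn : 0 ≤ ∑ a, ∑ b, W a b * (x a - x b)^2 :=
    Finset.sum_nonneg fun a _ => Finset.sum_nonneg fun b _ =>
      mul_nonneg (hWnn a b) (sq_nonneg _)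
  linarith

private lemma quad_zero_edges {n : ℕ} (W : Matrix (Fin n) (Fin n) ℝ)
    (hWs : ∀ a b, W a b = W b a) (hWnn : ∀ a b, 0 ≤ W a b) (x : Fin n → ℝ)
    (h0 : ∑ a, x a * ((∑ m, W a m) * x a - ∑ k, W a k * x k) = 0) :
    ∀ a b, 0 < W a b → x a = x b := by
  have h := quadId W hWs x
  have hsum : ∑ a, ∑ b, W a b * (x a - x b)^2 = 0 := by rw [h, h0]; ring
  have houter := (Finset.sum_eq_zero_iff_of_nonneg
    (fun a _ => Finset.sum_nonneg fun b _ => mul_nonneg (hWnn a b) (sq_nonneg _))).mp hsum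
  intro a b hW
  have hinner := (Finset.sum_eq_zero_iff_of_nonneg
    (fun b _ => mul_nonneg (hWnn a b) (sq_nonneg _))).mp (houter a (Finset.mem_univ a))
  have hb := hinner b (Finset.mem_univ b)
  have : (x a - x b)^2 = 0 := by
    rcases mul_eq_zero.mp hb with h | h
    · exact absurd h (ne_of_gt hW)
    · exact h
  have := pow_eq_zero_iff (n := 2) (by norm_num) |>.mp this
  linarith [sub_eq_zero.mp this]

private lemma quad_ge_single {n : ℕ} (W : Matrix (Fin n) (Fin n) ℝ)
    (hWs : ∀ a b, W a b = W b a) (hWnn : ∀ a b, 0 ≤ W a b) (x : Fin n → ℝ)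
    (i k : Fin n) (hik : i ≠ k) :
    W i k * (x i - x k)^2 ≤ ∑ a, x a * ((∑ m, W a m) * x a - ∑ b, W a b * x b) := by
  classical
  set g : Fin n → ℝ := fun a => ∑ b, W a b * (x a - x b)^2 with hg
  have hgnn : ∀ a, 0 ≤ g a := fun a =>
    Finset.sum_nonneg fun b _ => mul_nonneg (hWnn a b) (sq_nonneg _)
  have hsingle : ∀ a c : Fin n, W a c * (x a - x c)^2 ≤ g a := fun a c =>
    Finset.single_le_sum (f := fun b => W a b * (x a - x b)^2)
      (fun b _ => mul_nonneg (hWnn a b) (sq_nonneg _)) (Finset.mem_univ c)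
  have hpair : g i + g k ≤ ∑ a, g a := by
    rw [← Finset.sum_pair hik]
    exact Finset.sum_le_sum_of_subset_of_nonneg (Finset.subset_univ _)
      (fun a _ _ => hgnn a)
  have hQ : ∑ a, g a = 2 * ∑ a, x a * ((∑ m, W a m) * x a - ∑ b, W a b * x b) :=
    quadId W hWs x
  have h1 : W i k * (x i - x k)^2 ≤ g i := hsingle i k
  have h2 : W k i * (x k - x i)^2 ≤ g k := hsingle k i
  have h3 : W k i * (x k - x i)^2 = W i k * (x i - x k)^2 := by rw [hWs k i]; ring
  linarith


/-- If a symmetric zero-diagonal nonnegative matrix `D` dominates the reciprocal weight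
matrix entrywise and the upper-triangular part of the identity
`L·D + 2·I = (2·1 − d)·1ᵀ` holds, then the full matrix identity holds. -/
theorem upper_triangular_identity_implies_full {n : ℕ} (hn : 1 ≤ n)
    (W : Matrix (Fin n) (Fin n) ℝ)
    (hsymm : W.IsSymm) (hnonneg : ∀ i j, 0 ≤ W i j) (hdiag : ∀ i, W i i = 0)
    (L : Matrix (Fin n) (Fin n) ℝ)
    (hL : L = Matrix.diagonal (fun i => ∑ j, W i j) - W)
    (d : Fin n → ℝ)
    (hd : ∀ i, d i = ((Finset.univ.filter fun j => 0 < W i j).card : ℝ))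
    (D : Matrix (Fin n) (Fin n) ℝ)
    (hDsymm : D.IsSymm) (hDdiag : ∀ i, D i i = 0) (hDnonneg : ∀ i j, 0 ≤ D i j)
    (hDW : ∀ i j, 0 < W i j → 1 / W i j ≤ D i j)
    (hupper : ∀ i j : Fin n, i < j →
      ((L * D + (2 : ℝ) • (1 : Matrix (Fin n) (Fin n) ℝ) -
        Matrix.vecMulVec (fun i => 2 - d i) (fun _ => (1 : ℝ)) :
        Matrix (Fin n) (Fin n) ℝ)) i j = 0) :
    L * D + (2 : ℝ) • (1 : Matrix (Fin n) (Fin n) ℝ) =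
      Matrix.vecMulVec (fun i => 2 - d i) (fun _ => (1 : ℝ)) := by
  classical
  have hWs : ∀ a b, W a b = W b a := fun a b => (hsymm.apply b a)
  have hDs : ∀ a b, D a b = D b a := fun a b => (hDsymm.apply b a)
  have hLapp : ∀ a k, L a k = (if a = k then (∑ m, W a m) else 0) - W a k := by
    intro a k; rw [hL]
    by_cases h : a = k
    · subst h; simp [Matrix.diagonal_apply]
    · simp [Matrix.diagonal_apply, h]
  have hLs : ∀ a b, L a b = L b a := by
    intro a b
    rcases eq_or_ne a b with h | h
    · subst h; rfl
    · rw [hLapp, hLapp, hWs]; simp [h, Ne.symm h]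
  have hrowL : ∀ a, ∑ k, L a k = 0 := by
    intro a
    have h1 : ∑ k, L a k = (∑ k, (if a = k then (∑ m, W a m) else 0)) - ∑ k, W a k := by
      rw [← Finset.sum_sub_distrib]
      exact Finset.sum_congr rfl fun k _ => hLapp a k
    rw [h1, Finset.sum_ite_eq Finset.univ a (fun _ => ∑ m, W a m)]
    simp
  have hLD : ∀ a j, (L * D) a j = (∑ m, W a m) * D a j - ∑ k, W a k * D k j := by
    intro a j
    rw [Matrix.mul_apply]
    have h1 : ∀ k : Fin n, L a k * D k j
        = (if a = k then (∑ m, W a m) * D k j else 0) - W a k * D k j := by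
      intro k; rw [hLapp]
      by_cases h : a = k <;> simp [h] <;> ring
    rw [Finset.sum_congr rfl fun k _ => h1 k, Finset.sum_sub_distrib,
        Finset.sum_ite_eq Finset.univ a (fun k => (∑ m, W a m) * D k j)]
    simp
  have hup : ∀ i j, i < j → (L * D) i j = 2 - d i := by
    intro i j hij
    have h := hupper i j hij
    have hne : i ≠ j := ne_of_lt hij
    simp only [Matrix.sub_apply, Matrix.add_apply, Matrix.smul_apply, Matrix.one_apply,
      if_neg hne, Matrix.vecMulVec_apply, smul_eq_mul, mul_zero, mul_one, add_zero] at h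
    linarith
  have hdge : ∀ j, d j ≤ ∑ k, W j k * D k j := by
    intro j
    have hcard : d j = ∑ k ∈ Finset.univ.filter (fun k => 0 < W j k), (1:ℝ) := by
      rw [hd]; simp
    have hterm : ∀ k ∈ Finset.univ.filter (fun k => 0 < W j k), (1:ℝ) ≤ W j k * D k j := by
      intro k hk
      have hW : 0 < W j k := (Finset.mem_filter.mp hk).2
      have h1 : 1 / W j k ≤ D j k := hDW j k hW
      have h2 : 1 ≤ D j k * W j k := (div_le_iff₀ hW).mp h1
      rw [hDs k j]; nlinarith
    have hsub : ∑ k ∈ Finset.univ.filter (fun k => 0 < W j k), W j k * D k j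
        ≤ ∑ k, W j k * D k j :=
      Finset.sum_le_sum_of_subset_of_nonneg (Finset.filter_subset _ _)
        (fun k _ _ => mul_nonneg (hnonneg j k) (hDnonneg k j))
    calc d j = ∑ k ∈ Finset.univ.filter (fun k => 0 < W j k), (1:ℝ) := hcard
      _ ≤ ∑ k ∈ Finset.univ.filter (fun k => 0 < W j k), W j k * D k j :=
          Finset.sum_le_sum hterm
      _ ≤ ∑ k, W j k * D k j := hsub
  have hLDdiag : ∀ j, (L*D) j j = - ∑ k, W j k * D k j := by
    intro j; rw [hLD, hDdiag]; ring
  set M : Fin n := ⟨n-1, by omega⟩ with hM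
  have hleM : ∀ i : Fin n, i ≤ M := by
    intro i
    have h := i.isLt
    rw [Fin.le_def]
    simp only [hM]
    omega
  have hltM : ∀ i : Fin n, i ≠ M → i < M := fun i h => lt_of_le_of_ne (hleM i) h
  -- every nonempty W-closed set contains M
  have hclosed : ∀ C : Finset (Fin n), C.Nonempty →
      (∀ i ∈ C, ∀ k, k ∉ C → W i k = 0) → M ∈ C := by
    intro C hne hcl
    by_contra hMC
    have hsumL : ∀ k, ∑ i ∈ C, L i k = 0 := by
      intro k
      have hexp : ∑ i ∈ C, L i k
          = (∑ i ∈ C, (if i = k then (∑ m, W i m) else 0)) - ∑ i ∈ C, W i k := by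
        rw [← Finset.sum_sub_distrib]
        exact Finset.sum_congr rfl fun i _ => hLapp i k
      by_cases hk : k ∈ C
      · rw [hexp, Finset.sum_ite_eq' C k (fun i => ∑ m, W i m), if_pos hk]
        have h1 : ∑ i ∈ C, W i k = ∑ i ∈ C, W k i :=
          Finset.sum_congr rfl fun i _ => hWs i k
        have h2 : ∑ i ∈ C, W k i = ∑ m, W k m :=
          Finset.sum_subset (Finset.subset_univ C) (fun i _ hi => hcl k hk i hi)
        rw [h1, h2]; ring
      · rw [hexp, Finset.sum_ite_eq' C k (fun i => ∑ m, W i m), if_neg hk]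
        have h3 : ∑ i ∈ C, W i k = 0 := Finset.sum_eq_zero fun i hi => hcl i hi k hk
        rw [h3]; ring
    have hCLD : ∀ j, ∑ i ∈ C, (L*D) i j = 0 := by
      intro j
      have h1 : ∑ i ∈ C, (L*D) i j = ∑ k, (∑ i ∈ C, L i k) * D k j := by
        calc ∑ i ∈ C, (L*D) i j = ∑ i ∈ C, ∑ k, L i k * D k j :=
              Finset.sum_congr rfl fun i _ => Matrix.mul_apply
          _ = ∑ k, ∑ i ∈ C, L i k * D k j := Finset.sum_comm
          _ = ∑ k, (∑ i ∈ C, L i k) * D k j :=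
              Finset.sum_congr rfl fun k _ => (Finset.sum_mul C (fun i => L i k) (D k j)).symm
      rw [h1]
      exact Finset.sum_eq_zero fun k _ => by rw [hsumL k, zero_mul]
    have hsum1 : ∑ i ∈ C, (2 - d i) = 0 := by
      have h0 := hCLD M
      rw [Finset.sum_congr rfl
        (fun i hi => hup i M (hltM i (fun he => hMC (he ▸ hi))))] at h0
      exact h0
    have hj0C : C.max' hne ∈ C := C.max'_mem hne
    set j0 := C.max' hne with hj0
    have hsplit : ∑ i ∈ C, (L*D) i j0 = ∑ i ∈ C.erase j0, (L*D) i j0 + (L*D) j0 j0 :=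
      (Finset.sum_erase_add C _ hj0C).symm
    have herase : ∀ i ∈ C.erase j0, (L*D) i j0 = 2 - d i := by
      intro i hi
      obtain ⟨hne', hiC⟩ := Finset.mem_erase.mp hi
      exact hup i j0 (lt_of_le_of_ne (C.le_max' i hiC) hne')
    have hsum2 : ∑ i ∈ C.erase j0, (2 - d i) + (2 - d j0) = ∑ i ∈ C, (2 - d i) :=
      Finset.sum_erase_add C _ hj0C
    have hdiag0 : (L*D) j0 j0 ≤ -(d j0) := by
      rw [hLDdiag]; linarith [hdge j0]
    have h0 := hCLD j0
    rw [hsplit, Finset.sum_congr rfl herase] at h0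
    have : (0:ℝ) ≤ -2 := by linarith
    linarith
  -- constancy of edge-harmonic functions
  have hconst : ∀ x : Fin n → ℝ, (∀ a b, 0 < W a b → x a = x b) → ∀ i, x i = x M := by
    intro x hedge i
    by_contra hxi
    have hiC : i ∈ Finset.univ.filter (fun t => x t ≠ x M) := by simp [hxi]
    have hMem := hclosed (Finset.univ.filter (fun t => x t ≠ x M)) ⟨i, hiC⟩ ?side
    case side =>
      intro a ha k hk
      by_contra hW
      have hWpos : 0 < W a k := lt_of_le_of_ne (hnonneg a k) (Ne.symm hW)
      have hxa : x a = x k := hedge a k hWpos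
      simp only [Finset.mem_filter, Finset.mem_univ, true_and] at ha hk
      rw [not_not] at hk
      exact ha (hxa.trans hk)
    simp at hMem
  -- pairing with L equals the quadratic form expression
  have hxLx : ∀ x : Fin n → ℝ, ∑ a, x a * (∑ k, L a k * x k)
      = ∑ a, x a * ((∑ m, W a m) * x a - ∑ k, W a k * x k) := by
    intro x
    refine Finset.sum_congr rfl fun a _ => ?_
    congr 1
    have h1 : ∀ k, L a k * x k
        = (if a = k then (∑ m, W a m) * x k else 0) - W a k * x k := by
      intro k; rw [hLapp]
      by_cases h : a = k <;> simp [h] <;> ring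
    rw [Finset.sum_congr rfl fun k _ => h1 k, Finset.sum_sub_distrib,
        Finset.sum_ite_eq Finset.univ a (fun k => (∑ m, W a m) * x k)]
    simp
  -- the matrix K = L + J and its inverse H
  set K : Matrix (Fin n) (Fin n) ℝ :=
    L + Matrix.vecMulVec (fun _ => (1:ℝ)) (fun _ => (1:ℝ)) with hK
  have hKapp : ∀ a b, K a b = L a b + 1 := by
    intro a b; simp [hK, Matrix.add_apply, Matrix.vecMulVec_apply]
  have hnR : (0:ℝ) < (n:ℝ) := by positivity
  have hKdet : K.det ≠ 0 := by
    intro h0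
    obtain ⟨v, hv0, hKv⟩ := (Matrix.exists_mulVec_eq_zero_iff).mpr h0
    have hKvapp : ∀ a, ∑ k, K a k * v k = 0 := by
      intro a
      have h := congrFun hKv a
      simpa [Matrix.mulVec, dotProduct] using h
    have hexp : ∀ a, ∑ k, K a k * v k = (∑ k, L a k * v k) + ∑ k, v k := by
      intro a
      rw [← Finset.sum_add_distrib]
      exact Finset.sum_congr rfl fun k _ => by rw [hKapp]; ring
    have hLv : ∀ a, ∑ k, L a k * v k = - ∑ k, v k := by
      intro a
      have h := hKvapp a
      rw [hexp] at h
      linarith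
    have hquad : ∑ a, v a * (∑ k, L a k * v k) = - ((∑ a, v a) * (∑ k, v k)) := by
      calc ∑ a, v a * (∑ k, L a k * v k) = ∑ a, v a * (- ∑ k, v k) :=
            Finset.sum_congr rfl fun a _ => by rw [hLv]
        _ = - ((∑ a, v a) * (∑ k, v k)) := by
            rw [← Finset.sum_mul]; ring
    have h1 : 0 ≤ ∑ a, v a * (∑ k, L a k * v k) := by
      rw [hxLx v]; exact quad_nonneg W hWs hnonneg v
    have hS : ∑ k, v k = 0 := by nlinarith [h1, hquad]
    have hquad0 : ∑ a, v a * (∑ k, L a k * v k) = 0 := by rw [hquad, hS]; ring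
    have hedge := quad_zero_edges W hWs hnonneg v (by rw [← hxLx v]; exact hquad0)
    have hvconst := hconst v hedge
    have hsum : ∑ k, v k = ∑ _k : Fin n, v M := Finset.sum_congr rfl fun k _ => hvconst k
    rw [hsum, Finset.sum_const, Finset.card_univ, Fintype.card_fin, nsmul_eq_mul] at hS
    have hvM : v M = 0 := by
      rcases mul_eq_zero.mp hS with h | h
      · exact absurd h (ne_of_gt hnR)
      · exact h
    exact hv0 (funext fun k => by simp [hvconst k, hvM])
  have hKunit : IsUnit K.det := isUnit_iff_ne_zero.mpr hKdet
  set H : Matrix (Fin n) (Fin n) ℝ := K⁻¹ with hH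
  have hKH : K * H = 1 := Matrix.mul_nonsing_inv K hKunit
  have hHK : H * K = 1 := Matrix.nonsing_inv_mul K hKunit
  have hKsymm : ∀ a b, K a b = K b a := fun a b => by rw [hKapp, hKapp, hLs]
  have hHs : ∀ a b, H a b = H b a := by
    have hKT : Kᵀ = K := by
      ext a b; rw [Matrix.transpose_apply]; exact hKsymm b a
    have hHT : Hᵀ = H := by
      rw [hH, Matrix.transpose_nonsing_inv, hKT]
    intro a b
    calc H a b = Hᵀ b a := (Matrix.transpose_apply H b a).symm
      _ = H b a := by rw [hHT]
  have hHrow : ∀ j, ∑ k, H j k = 1/(n:ℝ) := by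
    have h1 : K *ᵥ (fun _ => (1:ℝ)/n) = (fun _ => (1:ℝ)) := by
      funext a
      have hKsum : ∑ k, K a k = (n:ℝ) := by
        have : ∑ k, K a k = (∑ k, L a k) + ∑ _k : Fin n, (1:ℝ) := by
          rw [← Finset.sum_add_distrib]
          exact Finset.sum_congr rfl fun k _ => hKapp a k
        rw [this, hrowL]; simp
      have h2 : ∑ k, K a k * ((1:ℝ)/n) = (∑ k, K a k) * ((1:ℝ)/n) :=
        (Finset.sum_mul Finset.univ (fun k => K a k) ((1:ℝ)/n)).symm
      simp only [Matrix.mulVec, dotProduct]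
      rw [h2, hKsum]
      field_simp
    have h2 : (fun _ => (1:ℝ)/n) = H *ᵥ (fun _ => (1:ℝ)) := by
      calc (fun _ => (1:ℝ)/n) = (1 : Matrix (Fin n) (Fin n) ℝ) *ᵥ (fun _ => (1:ℝ)/n) :=
            (Matrix.one_mulVec _).symm
        _ = (H * K) *ᵥ (fun _ => (1:ℝ)/n) := by rw [hHK]
        _ = H *ᵥ (K *ᵥ (fun _ => (1:ℝ)/n)) := (Matrix.mulVec_mulVec _ H K).symm
        _ = H *ᵥ (fun _ => (1:ℝ)) := by rw [h1]
    intro j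
    have h3 := congrFun h2 j
    simpa [Matrix.mulVec, dotProduct] using h3.symm
  have hHcol : ∀ j, ∑ k, H k j = 1/(n:ℝ) := by
    intro j
    rw [Finset.sum_congr rfl fun k _ => hHs k j]
    exact hHrow j
  have hLH : ∀ a j, ∑ k, L a k * H k j = (if a = j then 1 else 0) - 1/(n:ℝ) := by
    intro a j
    have h1 : ∀ k, L a k * H k j = K a k * H k j - H k j := by
      intro k; rw [hKapp]; ring
    rw [Finset.sum_congr rfl fun k _ => h1 k, Finset.sum_sub_distrib]
    have h2 : ∑ k, K a k * H k j = (if a = j then 1 else 0) := by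
      have h3 : (K * H) a j = ∑ k, K a k * H k j := Matrix.mul_apply
      rw [← h3, hKH, Matrix.one_apply]
    rw [h2, hHcol]
  -- variational bound : W i k * r i k ≤ 1
  have hWr_le : ∀ i k, i ≠ k → W i k * (H i i + H k k - 2 * H i k) ≤ 1 := by
    intro i k hik
    by_cases hW : W i k = 0
    · rw [hW, zero_mul]; norm_num
    have hWpos : 0 < W i k := lt_of_le_of_ne (hnonneg i k) (Ne.symm hW)
    set φ : Fin n → ℝ := fun t => H t i - H t k with hφ
    have hLφ : ∀ a, ∑ s, L a s * φ s
        = (if a = i then (1:ℝ) else 0) - (if a = k then (1:ℝ) else 0) := by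
      intro a
      have h1 : ∀ s, L a s * φ s = L a s * H s i - L a s * H s k := by
        intro s; rw [hφ]; ring
      rw [Finset.sum_congr rfl fun s _ => h1 s, Finset.sum_sub_distrib, hLH, hLH]
      ring
    have hpair : ∑ a, φ a * (∑ s, L a s * φ s) = φ i - φ k := by
      have h1 : ∀ a, φ a * (∑ s, L a s * φ s)
          = (if a = i then φ a else 0) - (if a = k then φ a else 0) := by
        intro a; rw [hLφ]
        rcases eq_or_ne a i with h1 | h1
        · subst h1; rw [if_pos rfl, if_pos rfl, if_neg hik, if_neg hik]; ring
        · rcases eq_or_ne a k with h2 | h2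
          · subst h2; rw [if_neg h1, if_neg h1, if_pos rfl, if_pos rfl]; ring
          · rw [if_neg h1, if_neg h1, if_neg h2, if_neg h2]; ring
      rw [Finset.sum_congr rfl fun a _ => h1 a, Finset.sum_sub_distrib,
          Finset.sum_ite_eq' Finset.univ i φ, Finset.sum_ite_eq' Finset.univ k φ]
      simp
    have hφik : φ i - φ k = H i i + H k k - 2 * H i k := by
      rw [hφ]; simp only []
      rw [hHs k i]; ring
    have hsingle := quad_ge_single W hWs hnonneg φ i k hik
    rw [← hxLx φ, hpair, hφik] at hsingle
    set rv : ℝ := H i i + H k k - 2 * H i k with hrv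
    have h2 : W i k * (W i k * rv^2) ≤ W i k * rv :=
      mul_le_mul_of_nonneg_left hsingle (le_of_lt hWpos)
    nlinarith [sq_nonneg (W i k * rv - 1)]
  -- diagonal of L * H
  have hLHdiagsum : ∀ i, (∑ m, W i m) * H i i - ∑ k, W i k * H i k = 1 - 1/(n:ℝ) := by
    intro i
    have h := hLH i i
    have h1 : ∀ k, L i k * H k i
        = (if i = k then (∑ m, W i m) * H k i else 0) - W i k * H i k := by
      intro k; rw [hLapp, hHs k i]
      by_cases hh : i = k <;> simp [hh] <;> ring
    rw [Finset.sum_congr rfl fun k _ => h1 k, Finset.sum_sub_distrib,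
        Finset.sum_ite_eq Finset.univ i (fun k => (∑ m, W i m) * H k i)] at h
    simp only [Finset.mem_univ, if_pos, if_true] at h
    linarith [h]
  have hexp : ∀ i, ∑ k, W i k * (H i i + H k k - 2 * H i k)
      = (∑ m, W i m) * H i i + (∑ k, W i k * H k k) - 2 * ∑ k, W i k * H i k := by
    intro i
    have h1 : ∑ k, W i k * (H i i + H k k - 2*H i k)
        = ((∑ k, W i k * H i i) + (∑ k, W i k * H k k)) - ∑ k, 2*(W i k * H i k) := by
      rw [← Finset.sum_add_distrib, ← Finset.sum_sub_distrib]
      exact Finset.sum_congr rfl fun k _ => by ring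
    have h2 : ∑ k, W i k * H i i = (∑ m, W i m) * H i i :=
      (Finset.sum_mul Finset.univ (fun k => W i k) (H i i)).symm
    have h3 : ∑ k, 2*(W i k * H i k) = 2 * ∑ k, W i k * H i k :=
      (Finset.mul_sum Finset.univ (fun k => W i k * H i k) (2:ℝ)).symm
    rw [h1, h2, h3]
  have hA : ∑ i, ∑ k, W i k * H k k = ∑ i, (∑ m, W i m) * H i i := by
    rw [Finset.sum_comm]
    refine Finset.sum_congr rfl fun k _ => ?_
    calc ∑ i, W i k * H k k = (∑ i, W i k) * H k k :=
          (Finset.sum_mul Finset.univ (fun i => W i k) (H k k)).symm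
      _ = (∑ m, W k m) * H k k := by
          rw [Finset.sum_congr rfl fun i _ => hWs i k]
  have hFoster : ∑ i, ∑ k, W i k * (H i i + H k k - 2 * H i k) = 2 * ((n:ℝ) - 1) := by
    rw [Finset.sum_congr rfl fun i _ => hexp i, Finset.sum_sub_distrib,
        Finset.sum_add_distrib, hA]
    have h1 : ∑ i, 2 * ∑ k, W i k * H i k = 2 * ∑ i, ∑ k, W i k * H i k :=
      (Finset.mul_sum Finset.univ (fun i => ∑ k, W i k * H i k) (2:ℝ)).symm
    have h2 : ∑ i, ((∑ m, W i m) * H i i - ∑ k, W i k * H i k) = (n:ℝ) - 1 := by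
      rw [Finset.sum_congr rfl fun i _ => hLHdiagsum i, Finset.sum_const,
          Finset.card_univ, Fintype.card_fin, nsmul_eq_mul]
      field_simp
    rw [Finset.sum_sub_distrib] at h2
    rw [h1]
    linarith [h2]
  -- per-row bound by degree
  have hfull : ∀ i, ∑ k, W i k * (H i i + H k k - 2*H i k)
      = ∑ k ∈ Finset.univ.filter (fun k => 0 < W i k), W i k * (H i i + H k k - 2*H i k) := by
    intro i
    refine (Finset.sum_subset (Finset.filter_subset _ _) fun k _ hk => ?_).symm
    have hW0 : W i k = 0 := by
      have := (Finset.mem_filter.not.mp hk)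
      push_neg at this
      have h2 := this (Finset.mem_univ k)
      exact le_antisymm h2 (hnonneg i k)
    rw [hW0, zero_mul]
  have hcard : ∀ i, ∑ k ∈ Finset.univ.filter (fun k => 0 < W i k), (1:ℝ) = d i := by
    intro i; rw [hd]; simp
  have hne_of_mem : ∀ i k, 0 < W i k → i ≠ k := by
    intro i k hW he
    rw [← he, hdiag i] at hW
    exact lt_irrefl 0 hW
  have hWr_per : ∀ i, ∑ k, W i k * (H i i + H k k - 2*H i k) ≤ d i := by
    intro i
    rw [hfull i, ← hcard i]
    refine Finset.sum_le_sum fun k hk => ?_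
    have hW : 0 < W i k := (Finset.mem_filter.mp hk).2
    exact hWr_le i k (hne_of_mem i k hW)
  -- column sums of L vanish, and the sum of degrees is at most 2n-2
  have hcolL : ∀ k, ∑ a, L a k = 0 := by
    intro k
    rw [Finset.sum_congr rfl fun a _ => hLs a k]
    exact hrowL k
  have hsumd_le : ∑ i, d i ≤ 2*(n:ℝ) - 2 := by
    have h0 : ∑ i, (L*D) i M = 0 := by
      have h1 : ∑ i, (L*D) i M = ∑ k, (∑ i, L i k) * D k M := by
        calc ∑ i, (L*D) i M = ∑ i, ∑ k, L i k * D k M :=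
              Finset.sum_congr rfl fun i _ => Matrix.mul_apply
          _ = ∑ k, ∑ i, L i k * D k M := Finset.sum_comm
          _ = ∑ k, (∑ i, L i k) * D k M :=
              Finset.sum_congr rfl fun k _ =>
                (Finset.sum_mul Finset.univ (fun i => L i k) (D k M)).symm
      rw [h1]
      exact Finset.sum_eq_zero fun k _ => by rw [hcolL k, zero_mul]
    have hMu : M ∈ (Finset.univ : Finset (Fin n)) := Finset.mem_univ M
    have hsplit : ∑ i ∈ Finset.univ.erase M, (L*D) i M + (L*D) M M = ∑ i, (L*D) i M :=
      Finset.sum_erase_add _ _ hMu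
    have herase : ∀ i ∈ Finset.univ.erase M, (L*D) i M = 2 - d i := by
      intro i hi
      exact hup i M (hltM i (Finset.mem_erase.mp hi).1)
    have hsum2 : ∑ i ∈ Finset.univ.erase M, (2 - d i) + (2 - d M) = ∑ i, (2 - d i) :=
      Finset.sum_erase_add _ _ hMu
    have hsumall : ∑ i : Fin n, (2 - d i) = 2*(n:ℝ) - ∑ i, d i := by
      rw [Finset.sum_sub_distrib, Finset.sum_const, Finset.card_univ, Fintype.card_fin,
        nsmul_eq_mul]
      ring
    have hdiagM : (L*D) M M ≤ -(d M) := by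
      rw [hLDdiag]; linarith [hdge M]
    rw [← hsplit, Finset.sum_congr rfl herase] at h0
    linarith [h0, hdiagM, hsum2, hsumall]
  -- equality: every edge is tight
  have hper : ∀ i, ∑ k, W i k * (H i i + H k k - 2*H i k) = d i := by
    have htot : ∑ i, (d i - ∑ k, W i k * (H i i + H k k - 2*H i k)) = 0 := by
      rw [Finset.sum_sub_distrib, hFoster]
      have := hsumd_le
      have h2 : ∑ i, d i - 2*((n:ℝ)-1) ≤ 0 := by linarith
      have h3 : 0 ≤ ∑ i, d i - 2*((n:ℝ)-1) := by
        have h4 : 0 ≤ ∑ i, (d i - ∑ k, W i k * (H i i + H k k - 2*H i k)) :=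
          Finset.sum_nonneg fun i _ => by linarith [hWr_per i]
        rw [Finset.sum_sub_distrib, hFoster] at h4
        linarith
      linarith
    intro i
    have := (Finset.sum_eq_zero_iff_of_nonneg
      (fun i _ => by linarith [hWr_per i] :
        ∀ i ∈ Finset.univ, 0 ≤ d i - ∑ k, W i k * (H i i + H k k - 2*H i k))).mp
      htot i (Finset.mem_univ i)
    linarith
  have htight : ∀ i k, 0 < W i k → W i k * (H i i + H k k - 2*H i k) = 1 := by
    intro i k hW
    have h1 : ∑ k ∈ Finset.univ.filter (fun k => 0 < W i k),
        ((1:ℝ) - W i k * (H i i + H k k - 2*H i k)) = 0 := by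
      rw [Finset.sum_sub_distrib, hcard i, ← hfull i, hper i]
      ring
    have h2 := (Finset.sum_eq_zero_iff_of_nonneg
      (fun k hk => by
        have hWk : 0 < W i k := (Finset.mem_filter.mp hk).2
        linarith [hWr_le i k (hne_of_mem i k hWk)] :
        ∀ k ∈ Finset.univ.filter (fun k => 0 < W i k),
          0 ≤ (1:ℝ) - W i k * (H i i + H k k - 2*H i k))).mp h1 k
      (Finset.mem_filter.mpr ⟨Finset.mem_univ k, hW⟩)
    linarith
  -- the gradient identity for g = diag H
  have hLg : ∀ i, (∑ m, W i m) * H i i - ∑ k, W i k * H k k = 2 - d i - 2/(n:ℝ) := by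
    intro i
    have e1 := hper i
    rw [hexp i] at e1
    have e2 := hLHdiagsum i
    have hn2 : 2/(n:ℝ) = 2 * (1/(n:ℝ)) := by ring
    rw [hn2]
    linarith [e1, e2]
  -- Z = D - R where R is the resistance matrix
  set Z : Fin n → Fin n → ℝ := fun a b => D a b - (H a a + H b b - 2*H a b) with hZ
  have hZs : ∀ a b, Z a b = Z b a := by
    intro a b; simp only [hZ]
    rw [hDs a b, hHs a b]; ring
  have hZdiag : ∀ t, Z t t = 0 := by
    intro t; simp only [hZ]
    rw [hDdiag t]; ring
  have hLZ : ∀ a j, ∑ k, L a k * Z k j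
      = (L*D) a j - (2 - d a) + 2*(if a = j then 1 else 0) := by
    intro a j
    have h1 : ∀ k, L a k * Z k j
        = L a k * D k j - L a k * H k k - L a k * H j j + 2*(L a k * H k j) := by
      intro k; simp only [hZ]; ring
    have hsplit : ∑ k, L a k * Z k j
        = (∑ k, L a k * D k j) - (∑ k, L a k * H k k)
          - (∑ k, L a k) * H j j + 2 * ∑ k, L a k * H k j := by
      rw [Finset.sum_congr rfl fun k _ => h1 k, Finset.sum_add_distrib,
          Finset.sum_sub_distrib, Finset.sum_sub_distrib]
      have e1 : ∑ k, L a k * H j j = (∑ k, L a k) * H j j :=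
        (Finset.sum_mul Finset.univ (fun k => L a k) (H j j)).symm
      have e2 : ∑ k, 2*(L a k * H k j) = 2 * ∑ k, L a k * H k j :=
        (Finset.mul_sum Finset.univ (fun k => L a k * H k j) (2:ℝ)).symm
      rw [e1, e2]
    have hp1 : ∑ k, L a k * D k j = (L*D) a j := (Matrix.mul_apply).symm
    have hp2 : ∑ k, L a k * H k k = 2 - d a - 2/(n:ℝ) := by
      have h2 : ∀ k, L a k * H k k
          = (if a = k then (∑ m, W a m) * H k k else 0) - W a k * H k k := by
        intro k; rw [hLapp]
        by_cases h : a = k <;> simp [h] <;> ring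
      rw [Finset.sum_congr rfl fun k _ => h2 k, Finset.sum_sub_distrib,
          Finset.sum_ite_eq Finset.univ a (fun k => (∑ m, W a m) * H k k)]
      simp only [Finset.mem_univ, if_true]
      exact hLg a
    rw [hsplit, hp1, hp2, hrowL, hLH]
    have hn0 : (n:ℝ) ≠ 0 := ne_of_gt hnR
    by_cases haj : a = j
    · rw [if_pos haj]; field_simp; ring
    · rw [if_neg haj]; field_simp; ring
  -- top-down induction: all columns of Z vanish
  have hcolZ : ∀ j a, Z a j = 0 := by
    by_contra hcon
    push_neg at hcon
    obtain ⟨j', a', hja⟩ := hcon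
    set S : Finset (Fin n) := Finset.univ.filter (fun j => ¬ ∀ a, Z a j = 0) with hS
    have hSne : S.Nonempty :=
      ⟨j', Finset.mem_filter.mpr ⟨Finset.mem_univ _, fun hall => hja (hall a')⟩⟩
    set j0 := S.max' hSne with hj0
    have hj0S : j0 ∈ S := S.max'_mem hSne
    have hhigh : ∀ i, j0 < i → ∀ a, Z a i = 0 := by
      intro i hi a
      by_contra hz
      have hiS : i ∈ S := Finset.mem_filter.mpr ⟨Finset.mem_univ _, fun hall => hz (hall a)⟩
      exact absurd (S.le_max' i hiS) (not_le.mpr hi)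
    set x : Fin n → ℝ := fun t => Z t j0 with hx
    have hBcol : ∀ a, ∑ k, L a k * x k
        = (L*D) a j0 - (2 - d a) + 2*(if a = j0 then 1 else 0) := by
      intro a; simp only [hx]; exact hLZ a j0
    have hquadz : ∑ a, x a * (∑ k, L a k * x k) = 0 := by
      refine Finset.sum_eq_zero fun a _ => ?_
      rcases lt_trichotomy a j0 with h | h | h
      · rw [hBcol a, hup a j0 h, if_neg (ne_of_lt h)]; ring
      · simp only [hx]; rw [h, hZdiag j0, zero_mul]
      · have hz : Z a j0 = 0 := by
          rw [hZs a j0]; exact hhigh a h j0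
        simp only [hx]; rw [hz, zero_mul]
    have hedge := quad_zero_edges W hWs hnonneg x (by rw [← hxLx x]; exact hquadz)
    have hxc := hconst x hedge
    have hxj0 : x j0 = 0 := by simp only [hx]; exact hZdiag j0
    have hxM : x M = 0 := by rw [← hxc j0, hxj0]
    have hall : ∀ a, Z a j0 = 0 := by
      intro a
      have h := hxc a
      rw [hxM] at h
      simpa [hx] using h
    exact (Finset.mem_filter.mp hj0S).2 hall
  -- conclusion
  have hfinal : ∀ a j, (L*D) a j - (2 - d a) + 2*(if a = j then 1 else 0) = 0 := by
    intro a j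
    rw [← hLZ a j]
    exact Finset.sum_eq_zero fun k _ => by rw [hcolZ j k, mul_zero]
  ext a j
  have h := hfinal a j
  simp only [Matrix.add_apply, Matrix.smul_apply, Matrix.one_apply, Matrix.vecMulVec_apply,
    smul_eq_mul, mul_one]
  by_cases haj : a = j
  · rw [if_pos haj]
    rw [if_pos haj] at h
    linarith
  · rw [if_neg haj]
    rw [if_neg haj] at h
    linarith
end

section
/- Let n ≥ 1, let G be a simple graph on Fin n with Laplacian matrix L (over ℝ) and degree vector d. Suppose D is a real symmetric n×n matrix with zero diagonal whose off-diagonal entries satisfy D i j ≥ 1 for all i ≠ j, and suppose (L·D + 2·I − (2·1 − d)·1ᵀ) i j = 0 for all indices i < j (indices ordered as elements of Fin n). Then G is a tree and D is its distance matrix, i.e., D i j = dist_G(i, j) for all i, j. -/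
open Matrix Finset BigOperators

/-!
Read column by column, the hypothesis says that for `i < j` the Laplacian of the column `D·j`
takes the value `2 - d i` at `i`. Over a set of vertices closed under adjacency the Laplacian of
any function sums to zero. For a component lying entirely below some vertex `j` this forces
`∑ d = 2 |C|`; using instead the largest vertex of the component as `j`, the missing term at
that vertex is `-∑ D k j ≤ -d j`, forcing `∑ d ≤ 2 (|C| - 1)`. Hence `G` is connected, and
taking `C` to be all of `V` gives at most `n - 1` edges, so `G` is a tree.

In a tree the function `dist(·, b)` has Laplacian `2 - d k` at every `k ≠ b`, since exactly one
neighbour of `k` is closer to `b`. By downward induction on the column `b`, the difference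
`D·b - dist(·, b)` vanishes on `{k ≥ b}` (by symmetry) and is harmonic below `b`, so it
vanishes everywhere by the maximum principle.
-/

namespace SimpleGraph

section Distance

variable {V : Type*} {G : SimpleGraph V}

lemma Adj.exists_isPath_cons_of_dist_add_one_eq [DecidableEq V] {k t b : V} (hkt : G.Adj k t)
    (h : G.dist t b + 1 = G.dist k b) : ∃ r : G.Walk t b, (Walk.cons hkt r).IsPath := by
  have hreach : G.Reachable t b := hkt.symm.reachable.trans (Reachable.of_dist_ne_zero (by omega))
  obtain ⟨r, hr, hrl⟩ := hreach.exists_path_of_dist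
  refine ⟨r, hr.cons fun hk => ?_⟩
  have := dist_le (r.dropUntil k hk)
  have := r.length_dropUntil_le_length hk
  omega

lemma IsTree.existsUnique_adj_dist_add_one_eq (hG : G.IsTree) {k b : V} (hkb : k ≠ b) :
    ∃! s, G.Adj k s ∧ G.dist s b + 1 = G.dist k b := by
  classical
  obtain ⟨p, -, hp⟩ := hG.connected.exists_path_of_dist k b
  cases p with
  | nil => exact absurd rfl hkb
  | cons hks q =>
    rename_i s
    have hs : G.dist s b + 1 = G.dist k b := by
      have := dist_le q
      have := hG.dist_eq_dist_add_one_of_adj b hks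
      rw [Walk.length_cons] at hp
      rw [dist_comm (u := b), dist_comm (u := b)] at this
      omega
    refine ⟨s, ⟨hks, hs⟩, fun t ⟨hkt, ht⟩ => ?_⟩
    obtain ⟨r, hr⟩ := hks.exists_isPath_cons_of_dist_add_one_eq hs
    obtain ⟨r', hr'⟩ := hkt.exists_isPath_cons_of_dist_add_one_eq ht
    have := (hG.isAcyclic.subsingleton_path k b).elim ⟨_, hr⟩ ⟨_, hr'⟩
    simp only [Subtype.mk.injEq, Walk.cons.injEq] at this
    exact this.1.symm

end Distance

section Laplacian

variable {V : Type*} [Fintype V] {G : SimpleGraph V} [DecidableRel G.Adj] [DecidableEq V]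

lemma lapMatrix_mulVec_apply_eq_sum {R : Type*} [NonAssocRing R] (v : V → R) (i : V) :
    (G.lapMatrix R *ᵥ v) i = ∑ k ∈ G.neighborFinset i, (v i - v k) := by
  rw [lapMatrix_mulVec_apply, sum_sub_distrib, sum_const, card_neighborFinset_eq_degree,
    nsmul_eq_mul]

lemma sum_lapMatrix_mulVec_eq_zero {R : Type*} [NonAssocRing R] {C : Finset V}
    (hC : ∀ i ∈ C, ∀ k, G.Adj i k → k ∈ C) (v : V → R) :
    ∑ i ∈ C, (G.lapMatrix R *ᵥ v) i = 0 := by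
  have hswap : ∑ i ∈ C, ∑ k ∈ G.neighborFinset i, v k =
      ∑ k ∈ C, ∑ i ∈ G.neighborFinset k, v k :=
    sum_comm' fun i k => by
      simp only [mem_neighborFinset]
      exact ⟨fun ⟨hi, hik⟩ => ⟨hik.symm, hC i hi k hik⟩,
        fun ⟨hki, hk⟩ => ⟨hC k hk i hki, hki.symm⟩⟩
  simp only [lapMatrix_mulVec_apply_eq_sum, sum_sub_distrib, hswap, sub_self]

lemma Connected.nonpos_of_lapMatrix_mulVec_eq_zero (hG : G.Connected)
    {S : Set V} {b : V} (hb : b ∈ S) {f : V → ℝ} (hS : ∀ k ∈ S, f k = 0)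
    (hf : ∀ k ∉ S, (G.lapMatrix ℝ *ᵥ f) k = 0) (k : V) : f k ≤ 0 := by
  have : Nonempty V := ⟨b⟩
  obtain ⟨x, hx⟩ := Finite.exists_max f
  suffices f x ≤ 0 from (hx k).trans this
  by_contra! hpos
  have hspread : ∀ u t, G.Adj u t → f u = f x → f t = f x := by
    intro u t hut hu
    have huS : u ∉ S := fun h => by linarith [hS u h]
    have hterms := (sum_eq_zero_iff_of_nonneg fun t _ => sub_nonneg.2 (hu ▸ hx t)).1
      ((lapMatrix_mulVec_apply_eq_sum f u).symm.trans (hf u huS))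
    linarith [hterms t ((mem_neighborFinset G u t).2 hut)]
  have hwalk : ∀ u v (p : G.Walk u v), f u = f x → f v = f x := by
    intro u v p
    induction p with
    | nil => exact id
    | cons h _ ih => exact fun hu => ih (hspread _ _ h hu)
  obtain ⟨p⟩ := hG x b
  linarith [hwalk x b p rfl, hS b hb]

theorem Connected.eq_zero_of_lapMatrix_mulVec_eq_zero (hG : G.Connected)
    {S : Set V} {b : V} (hb : b ∈ S) {f : V → ℝ} (hS : ∀ k ∈ S, f k = 0)
    (hf : ∀ k ∉ S, (G.lapMatrix ℝ *ᵥ f) k = 0) (k : V) : f k = 0 := by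
  refine le_antisymm (hG.nonpos_of_lapMatrix_mulVec_eq_zero hb hS hf k) ?_
  have := hG.nonpos_of_lapMatrix_mulVec_eq_zero hb (f := -f) (by simpa using hS)
    (fun k hk => by simp [mulVec_neg, hf k hk]) k
  simpa using this

lemma IsTree.lapMatrix_mulVec_dist_apply (hG : G.IsTree) {k b : V} (hkb : k ≠ b) :
    (G.lapMatrix ℝ *ᵥ fun v => (G.dist v b : ℝ)) k = 2 - G.degree k := by
  obtain ⟨s, ⟨hks, hs⟩, huniq⟩ := hG.existsUnique_adj_dist_add_one_eq hkb
  have hfar : ∀ t, G.Adj k t → t ≠ s → G.dist t b = G.dist k b + 1 := by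
    intro t hkt hts
    have hnear : G.dist t b + 1 ≠ G.dist k b := fun h => hts (huniq t ⟨hkt, h⟩)
    have := hG.dist_eq_dist_add_one_of_adj b hkt
    rw [dist_comm (u := b), dist_comm (u := b)] at this
    omega
  have hsum : ∑ t ∈ G.neighborFinset k, ((G.dist k b : ℝ) - G.dist t b + 1) = 2 := by
    rw [sum_eq_single_of_mem s ((mem_neighborFinset G k s).2 hks)]
    · rw [← hs]; push_cast; ring
    · intro t ht hts
      rw [hfar t ((mem_neighborFinset G k t).1 ht) hts]; push_cast; ring
  rw [lapMatrix_mulVec_apply_eq_sum, ← hsum, sum_add_distrib, sum_const,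
    card_neighborFinset_eq_degree, nsmul_one]
  ring

lemma sum_degree_eq_of_lapMatrix_mulVec_eq {C : Finset V}
    (hC : ∀ i ∈ C, ∀ k, G.Adj i k → k ∈ C) {v : V → ℝ}
    (hv : ∀ i ∈ C, (G.lapMatrix ℝ *ᵥ v) i = 2 - G.degree i) :
    ∑ i ∈ C, (G.degree i : ℝ) = 2 * #C := by
  have h := sum_lapMatrix_mulVec_eq_zero hC v
  rw [sum_congr rfl hv, sum_sub_distrib, sum_const, nsmul_eq_mul] at h
  linarith

lemma sum_degree_le_of_lapMatrix_mulVec_eq {C : Finset V}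
    (hC : ∀ i ∈ C, ∀ k, G.Adj i k → k ∈ C) {j : V} (hj : j ∈ C) {v : V → ℝ}
    (hv : ∀ i ∈ C.erase j, (G.lapMatrix ℝ *ᵥ v) i = 2 - G.degree i)
    (hvj : v j = 0) (hadj : ∀ k, G.Adj j k → 1 ≤ v k) :
    ∑ i ∈ C, (G.degree i : ℝ) ≤ 2 * (#C - 1) := by
  have h := sum_lapMatrix_mulVec_eq_zero hC v
  rw [← add_sum_erase C _ hj, sum_congr rfl hv, sum_sub_distrib, sum_const,
    card_erase_of_mem hj, nsmul_eq_mul, lapMatrix_mulVec_apply_eq_sum, hvj] at h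
  have hnbr : (G.degree j : ℝ) ≤ ∑ k ∈ G.neighborFinset j, v k := by
    calc (G.degree j : ℝ) = ∑ k ∈ G.neighborFinset j, (1 : ℝ) := by simp
      _ ≤ ∑ k ∈ G.neighborFinset j, v k :=
        sum_le_sum fun k hk => hadj k ((mem_neighborFinset G j k).1 hk)
  have hcard : ((#C - 1 : ℕ) : ℝ) = #C - 1 := Nat.cast_pred (card_pos.2 ⟨j, hj⟩)
  rw [sum_sub_distrib, sum_const_zero, zero_sub, hcard] at h
  linarith [add_sum_erase C (fun i => (G.degree i : ℝ)) hj]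

end Laplacian

section UpperIdentity

variable {V : Type*} [Fintype V] [LinearOrder V] {G : SimpleGraph V} [DecidableRel G.Adj]
  {D : Matrix V V ℝ}

theorem connected_of_lapMatrix_mul_apply_eq [Nonempty V]
    (hkey : ∀ i j, i < j → (G.lapMatrix ℝ * D) i j = 2 - G.degree i)
    (hdiag : ∀ i, D i i = 0) (hadj : ∀ i j, G.Adj i j → 1 ≤ D i j) : G.Connected := by
  classical
  obtain ⟨m, hm⟩ : ∃ m : V, ∀ i, i ≤ m := Finite.exists_max id
  suffices hreach : ∀ v, G.Reachable v m from
    ⟨fun u v => (hreach u).trans (hreach v).symm⟩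
  intro v
  by_contra hvm
  let C := univ.filter (G.Reachable v)
  have hC : ∀ i ∈ C, ∀ k, G.Adj i k → k ∈ C := by
    simp only [C, mem_filter, mem_univ, true_and]
    exact fun i hi k hik => hi.trans hik.reachable
  have hCne : C.Nonempty := ⟨v, by simp [C]⟩
  have hlt : ∀ i ∈ C, i < m := fun i hi =>
    (hm i).lt_of_ne fun h => hvm (h ▸ (mem_filter.1 hi).2)
  have h1 := sum_degree_eq_of_lapMatrix_mulVec_eq hC (v := Dᵀ m) fun i hi => hkey i m (hlt i hi)
  have h2 := sum_degree_le_of_lapMatrix_mulVec_eq hC (C.max'_mem hCne) (v := Dᵀ (C.max' hCne))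
    (fun i hi => hkey i _ ((C.le_max' i (mem_of_mem_erase hi)).lt_of_ne (ne_of_mem_erase hi)))
    (hdiag _) fun k hk => hadj k _ hk.symm
  linarith

theorem isTree_of_lapMatrix_mul_apply_eq [Nonempty V]
    (hkey : ∀ i j, i < j → (G.lapMatrix ℝ * D) i j = 2 - G.degree i)
    (hdiag : ∀ i, D i i = 0) (hadj : ∀ i j, G.Adj i j → 1 ≤ D i j) : G.IsTree := by
  have hG := connected_of_lapMatrix_mul_apply_eq hkey hdiag hadj
  obtain ⟨m, hm⟩ : ∃ m : V, ∀ i, i ≤ m := Finite.exists_max id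
  have hdeg := sum_degree_le_of_lapMatrix_mulVec_eq (C := univ) (fun _ _ _ _ => mem_univ _)
    (mem_univ m) (v := Dᵀ m) (fun i hi => hkey i m ((hm i).lt_of_ne (ne_of_mem_erase hi)))
    (hdiag m) fun k hk => hadj k m hk.symm
  have hsum : ∑ i, (G.degree i : ℝ) = 2 * #G.edgeFinset := by
    exact_mod_cast G.sum_degrees_eq_twice_card_edges
  rw [isTree_iff_connected_and_card]
  refine ⟨hG, le_antisymm ?_ hG.card_vert_le_card_edgeSet_add_one⟩
  rw [Nat.card_eq_fintype_card, ← edgeFinset_card, Nat.card_eq_fintype_card]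
  rw [card_univ] at hdeg
  have : (#G.edgeFinset : ℝ) + 1 ≤ Fintype.card V := by linarith
  exact_mod_cast this

theorem IsTree.eq_dist_of_lapMatrix_mul_apply_eq (hG : G.IsTree)
    (hkey : ∀ i j, i < j → (G.lapMatrix ℝ * D) i j = 2 - G.degree i)
    (hsymm : D.IsSymm) (hdiag : ∀ i, D i i = 0) (i j : V) : D i j = G.dist i j := by
  induction j using WellFoundedGT.induction generalizing i with
  | _ b ih =>
  let f : V → ℝ := fun k => D k b - G.dist k b
  have hS : ∀ k ∈ Set.Ici b, f k = 0 := by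
    intro k hk
    rcases (Set.mem_Ici.1 hk).eq_or_lt with rfl | hlt
    · simp [f, hdiag]
    · simp [f, ← hsymm.apply k b, ih k hlt b, dist_comm]
  have hf : ∀ k ∉ Set.Ici b, (G.lapMatrix ℝ *ᵥ f) k = 0 := by
    intro k hk
    have hkb : k < b := not_le.1 hk
    have hcol : (G.lapMatrix ℝ *ᵥ Dᵀ b) k = 2 - G.degree k := hkey k b hkb
    rw [show f = Dᵀ b - fun k => (G.dist k b : ℝ) from rfl, mulVec_sub, Pi.sub_apply, hcol,
      hG.lapMatrix_mulVec_dist_apply hkb.ne, sub_self]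
  simpa [f, sub_eq_zero] using hG.connected.eq_zero_of_lapMatrix_mulVec_eq_zero
    Set.self_mem_Ici hS hf i

end UpperIdentity

end SimpleGraph

/-- Unweighted case: if a symmetric zero-diagonal matrix `D` with off-diagonal entries
at least `1` satisfies the upper-triangular part of `L·D + 2·I = (2·1 − d)·1ᵀ`,
then `G` is a tree and `D` is its distance matrix. -/
theorem upper_triangular_identity_tree_and_distance {n : ℕ} (hn : 1 ≤ n)
    (G : SimpleGraph (Fin n)) [DecidableRel G.Adj]
    (L : Matrix (Fin n) (Fin n) ℝ) (hL : L = G.lapMatrix ℝ)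
    (d : Fin n → ℝ) (hd : ∀ i, d i = (G.degree i : ℝ))
    (D : Matrix (Fin n) (Fin n) ℝ)
    (hDsymm : D.IsSymm) (hDdiag : ∀ i, D i i = 0)
    (hDoff : ∀ i j : Fin n, i ≠ j → 1 ≤ D i j)
    (hupper : ∀ i j : Fin n, i < j →
      ((L * D + (2 : ℝ) • (1 : Matrix (Fin n) (Fin n) ℝ) -
        Matrix.vecMulVec (fun i => 2 - d i) (fun _ => (1 : ℝ)) :
        Matrix (Fin n) (Fin n) ℝ)) i j = 0) :
    G.IsTree ∧ ∀ i j, D i j = (G.dist i j : ℝ) := by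
  subst hL
  have hkey : ∀ i j, i < j → (G.lapMatrix ℝ * D) i j = 2 - G.degree i := by
    intro i j hij
    have h := hupper i j hij
    rw [Matrix.sub_apply, Matrix.add_apply, Matrix.smul_apply, one_apply_ne hij.ne, smul_zero,
      add_zero, vecMulVec_apply, mul_one, hd, sub_eq_zero] at h
    exact h
  have : Nonempty (Fin n) := ⟨⟨0, hn⟩⟩
  have hG := SimpleGraph.isTree_of_lapMatrix_mul_apply_eq hkey hDdiag
    fun i j hij => hDoff i j hij.ne
  exact ⟨hG, hG.eq_dist_of_lapMatrix_mul_apply_eq hkey hDsymm hDdiag⟩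
end

section
/- Let n ≥ 1 and let W be a real n×n matrix that is symmetric, has nonnegative entries, and zero diagonal, with Laplacian matrix L := diag(W·1) − W and degree vector d given by d_i := #{j : W i j > 0}. Let G be the simple graph on Fin n with an edge between distinct i and j iff W i j > 0. If D is a real symmetric n×n matrix with zero diagonal and nonnegative entries satisfying D i j ≥ 1 / (W i j) whenever W i j > 0, and (L·D + 2·I − (2·1 − d)·1ᵀ) i j = 0 for all indices i < j (indices ordered as elements of Fin n), then G is connected. -/
open Matrix Finset BigOperators

/-- If a symmetric zero-diagonal nonnegative matrix `D` dominates the reciprocal weight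
matrix entrywise and the upper-triangular part of the identity
`L·D + 2·I = (2·1 − d)·1ᵀ` holds, then the underlying simple graph is connected. -/
theorem upper_triangular_identity_implies_connected {n : ℕ} (hn : 1 ≤ n)
    (W : Matrix (Fin n) (Fin n) ℝ)
    (hsymm : W.IsSymm) (hnonneg : ∀ i j, 0 ≤ W i j) (hdiag : ∀ i, W i i = 0)
    (G : SimpleGraph (Fin n))
    (hG : ∀ i j, G.Adj i j ↔ i ≠ j ∧ 0 < W i j)
    (L : Matrix (Fin n) (Fin n) ℝ)
    (hL : L = Matrix.diagonal (fun i => ∑ j, W i j) - W)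
    (d : Fin n → ℝ)
    (hd : ∀ i, d i = ((Finset.univ.filter fun j => 0 < W i j).card : ℝ))
    (D : Matrix (Fin n) (Fin n) ℝ)
    (hDsymm : D.IsSymm) (hDdiag : ∀ i, D i i = 0) (hDnonneg : ∀ i j, 0 ≤ D i j)
    (hDW : ∀ i j, 0 < W i j → 1 / W i j ≤ D i j)
    (hupper : ∀ i j : Fin n, i < j →
      ((L * D + (2 : ℝ) • (1 : Matrix (Fin n) (Fin n) ℝ) -
        Matrix.vecMulVec (fun i => 2 - d i) (fun _ => (1 : ℝ)) :
        Matrix (Fin n) (Fin n) ℝ)) i j = 0) :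
    G.Connected := by
  classical
  have hWs : ∀ i j, W j i = W i j := fun i j => hsymm.apply i j
  have hDs : ∀ i j, D j i = D i j := fun i j => hDsymm.apply i j
  -- entry formula for L * D
  have hLD : ∀ i j, (L * D) i j = ∑ k, W i k * (D i j - D k j) := by
    intro i j
    have h1 : (L * D) i j
        = ∑ k, (Matrix.diagonal (fun i => ∑ j, W i j) i k * D k j - W i k * D k j) := by
      simp only [Matrix.mul_apply, hL, Matrix.sub_apply, sub_mul]
    have h2 : ∑ k, Matrix.diagonal (fun i => ∑ j, W i j) i k * D k j
        = (∑ l, W i l) * D i j := by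
      rw [Finset.sum_eq_single i]
      · simp
      · intro k _ hk
        rw [Matrix.diagonal_apply_ne' _ hk, zero_mul]
      · simp
    rw [h1, Finset.sum_sub_distrib, h2, Finset.sum_mul, ← Finset.sum_sub_distrib]
    exact Finset.sum_congr rfl fun k _ => by ring
  -- the key identity for i < j
  have hkey : ∀ i j : Fin n, i < j → (L * D) i j = 2 - d i := by
    intro i j hij
    have h := hupper i j hij
    have hne : i ≠ j := ne_of_lt hij
    simp only [Matrix.sub_apply, Matrix.add_apply, Matrix.smul_apply,
      Matrix.one_apply_ne hne, Matrix.vecMulVec_apply, smul_zero, add_zero, mul_one,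
      sub_eq_zero] at h
    exact h
  -- row sums over a "closed" set vanish
  have main : ∀ (C : Finset (Fin n)), (∀ i ∈ C, ∀ k, 0 < W i k → k ∈ C) →
      ∀ j : Fin n, ∑ i ∈ C, (L * D) i j = 0 := by
    intro C hC j
    have hrestr : ∀ i ∈ C, (L * D) i j = ∑ k ∈ C, W i k * (D i j - D k j) := by
      intro i hi
      rw [hLD]
      symm
      apply Finset.sum_subset (Finset.subset_univ C)
      intro k _ hk
      have hw : W i k = 0 := by
        by_contra h
        exact hk (hC i hi k (lt_of_le_of_ne (hnonneg i k) (Ne.symm h)))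
      simp [hw]
    rw [Finset.sum_congr rfl hrestr]
    simp only [mul_sub, Finset.sum_sub_distrib]
    have : ∑ i ∈ C, ∑ k ∈ C, W i k * D k j = ∑ i ∈ C, ∑ k ∈ C, W i k * D i j := by
      rw [Finset.sum_comm]
      exact Finset.sum_congr rfl fun i _ => Finset.sum_congr rfl fun k _ => by rw [hWs]
    rw [this, sub_self]
  -- degree lower bound
  have hdegle : ∀ m : Fin n, d m ≤ ∑ k, W m k * D k m := by
    intro m
    rw [hd m]
    have h1 : ((Finset.univ.filter fun k => 0 < W m k).card : ℝ)
        = ∑ k ∈ Finset.univ.filter (fun k => 0 < W m k), (1 : ℝ) := by simp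
    rw [h1]
    calc ∑ k ∈ Finset.univ.filter (fun k => 0 < W m k), (1 : ℝ)
        ≤ ∑ k ∈ Finset.univ.filter (fun k => 0 < W m k), W m k * D k m := by
          apply Finset.sum_le_sum
          intro k hk
          have hw : 0 < W m k := (Finset.mem_filter.mp hk).2
          have : 1 / W m k ≤ D m k := hDW m k hw
          rw [hDs m k]
          calc (1 : ℝ) = W m k * (1 / W m k) := by field_simp
            _ ≤ W m k * D m k := by
                exact mul_le_mul_of_nonneg_left this (le_of_lt hw)
      _ ≤ ∑ k, W m k * D k m := by
          apply Finset.sum_le_sum_of_subset_of_nonneg (Finset.subset_univ _)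
          intro k _ _
          exact mul_nonneg (hnonneg m k) (hDnonneg k m)
  -- the top vertex
  have hnpos : 0 < n := hn
  set t : Fin n := ⟨n - 1, by omega⟩ with ht
  have hreach : ∀ v, G.Reachable t v := by
    intro v
    by_contra hnr
    set C : Finset (Fin n) := Finset.univ.filter (fun k => G.Reachable v k) with hCdef
    have hvC : v ∈ C :=
      Finset.mem_filter.mpr ⟨Finset.mem_univ v, SimpleGraph.Reachable.refl v⟩
    have hmemC : ∀ i, i ∈ C → G.Reachable v i := by
      intro i hi
      exact (Finset.mem_filter.mp hi).2
    have hclosed : ∀ i ∈ C, ∀ k, 0 < W i k → k ∈ C := by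
      intro i hi k hw
      have hik : i ≠ k := by
        intro h
        rw [h, hdiag k] at hw
        exact lt_irrefl 0 hw
      have hadj : G.Adj i k := (hG i k).mpr ⟨hik, hw⟩
      have := (hmemC i hi).trans hadj.reachable
      simp [hCdef, this]
    have hnt : ∀ i ∈ C, i ≠ t := by
      intro i hi h
      exact hnr ((h ▸ hmemC i hi).symm)
    have hlt : ∀ i ∈ C, i < t := by
      intro i hi
      have h1 : (i : ℕ) ≠ n - 1 := by
        intro h
        exact hnt i hi (Fin.ext h)
      have h2 : (i : ℕ) < n := i.isLt
      exact Fin.lt_def.mpr (by simp [ht]; omega)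
    -- derivation 1
    have hder1 : ∑ i ∈ C, (2 - d i) = 0 := by
      have h0 := main C hclosed t
      rw [Finset.sum_congr rfl (fun i hi => hkey i t (hlt i hi))] at h0
      exact h0
    -- derivation 2
    have hCne : C.Nonempty := ⟨v, hvC⟩
    set m : Fin n := C.max' hCne with hm
    have hmC : m ∈ C := C.max'_mem hCne
    have hltm : ∀ i ∈ C.erase m, i < m := by
      intro i hi
      have h1 : i ≠ m := (Finset.mem_erase.mp hi).1
      have h2 : i ∈ C := (Finset.mem_erase.mp hi).2
      exact lt_of_le_of_ne (Finset.le_max' C i h2) h1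
    have h0 := main C hclosed m
    rw [← Finset.add_sum_erase C _ hmC] at h0
    have hdiagLD : (L * D) m m = -∑ k, W m k * D k m := by
      rw [hLD]
      rw [← Finset.sum_neg_distrib]
      exact Finset.sum_congr rfl fun k _ => by rw [hDdiag m]; ring
    rw [hdiagLD, Finset.sum_congr rfl (fun i hi => hkey i m (hltm i hi))] at h0
    have herase : ∑ i ∈ C.erase m, (2 - d i) = -(2 - d m) := by
      have h2 := Finset.add_sum_erase C (fun i => 2 - d i) hmC
      rw [hder1] at h2
      linarith
    have hfin : ∑ k, W m k * D k m = d m - 2 := by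
      rw [herase] at h0
      linarith
    have := hdegle m
    rw [hfin] at this
    linarith
  rw [SimpleGraph.connected_iff]
  exact ⟨fun u v => (hreach u).symm.trans (hreach v), ⟨t⟩⟩
end

section
/- Let n ≥ 1 and let W be a real n×n matrix that is symmetric, has nonnegative entries, and zero diagonal, with Laplacian matrix L := diag(W·1) − W and degree vector d given by d_i := #{j : W i j > 0}. If D is a real symmetric n×n matrix with zero diagonal and nonnegative entries satisfying D i j ≥ 1 / (W i j) whenever W i j > 0, and (L·D + 2·I − (2·1 − d)·1ᵀ) i j = 0 for all indices i < j (indices ordered as elements of Fin n), then ∑_{i=1}^n d_i = 2(n − 1). -/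
open Matrix Finset BigOperators

/-!
Let `M = L·D + 2I − (2·1 − d)·1ᵀ` and let `t` be the last index, so that column `t` of `M`
vanishes off the diagonal. Columns of `L` sum to zero over any union `S` of connected components
of the support graph of `W`, hence summing column `t` over `S` gives
`[t ∈ S] · M t t = 2 [t ∈ S] − ∑_{i ∈ S} (2 − d i)`.
Away from the component `C` of `t` this says `∑ d = 2 |S|`. On `C` it gives
`∑_{i ∈ C} d i = 2 (|C| − 1) + M t t`, where `M t t = d t − ∑_k W t k D k t ≤ 0` because `D`
dominates `1 / W`, while `∑_{i ∈ C} d i ≥ 2 (|C| − 1)` since the connected graph on `C` has at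
least `|C| − 1` edges. So `M t t = 0` and the degrees sum to `2 (n − 1)`.
-/

theorem card_filter_pos_le_sum_mul {ι K : Type*} [Fintype ι] [Field K] [LinearOrder K]
    [IsStrictOrderedRing K] {f g : ι → K} (hf : ∀ k, 0 ≤ f k)
    (hfg : ∀ k, 0 < f k → 1 / f k ≤ g k) :
    (#{k | 0 < f k} : K) ≤ ∑ k, f k * g k := by
  rw [← sum_boole]
  refine sum_le_sum fun k _ => ?_
  split_ifs with hk
  · exact (div_le_iff₀' hk).mp (hfg k hk)
  · simp [le_antisymm (not_lt.mp hk) (hf k)]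

namespace SimpleGraph

variable {V : Type*} [Fintype V] [DecidableEq V] {G : SimpleGraph V} [DecidableRel G.Adj]

theorem ConnectedComponent.two_mul_card_supp_le_sum_degree_add_two (C : G.ConnectedComponent) :
    2 * #C.supp.toFinset ≤ ∑ v ∈ C.supp.toFinset, G.degree v + 2 := by
  have hdeg (v : C.supp) : (G.induce C.supp).degree v = G.degree v :=
    degree_induce_of_neighborSet_subset fun _ hw => C.mem_supp_of_adj_mem_supp v.2 hw
  have hedges : Nat.card C.supp ≤ Nat.card (G.induce C.supp).edgeSet + 1 :=
    C.connected_toSimpleGraph.card_vert_le_card_edgeSet_add_one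
  rw [Nat.card_eq_card_toFinset, Nat.card_eq_fintype_card, ← edgeFinset_card] at hedges
  rw [sum_subtype (F := inferInstance) _ (fun _ => Set.mem_toFinset)]
  simp only [← hdeg, sum_degrees_eq_twice_card_edges]
  omega

end SimpleGraph

namespace Matrix

variable {V R : Type*}

section supportGraph

variable [Zero R] {W : Matrix V V R}

def supportGraph (W : Matrix V V R) : SimpleGraph V :=
  SimpleGraph.fromRel fun i j => W i j ≠ 0

theorem supportGraph_adj (hW : W.IsSymm) {i j : V} :
    W.supportGraph.Adj i j ↔ i ≠ j ∧ W i j ≠ 0 := by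
  simp [supportGraph, ← hW.apply i j]

theorem mem_supp_iff_of_apply_ne_zero (C : W.supportGraph.ConnectedComponent) {i k : V}
    (h : W i k ≠ 0) : i ∈ C.supp ↔ k ∈ C.supp := by
  by_cases hik : i = k
  · rw [hik]
  · exact C.mem_supp_congr_adj ((SimpleGraph.fromRel_adj _ _ _).mpr ⟨hik, .inl h⟩)

theorem degree_supportGraph [Fintype V] [DecidableEq R] [DecidableRel W.supportGraph.Adj]
    (hW : W.IsSymm) (hdiag : ∀ i, W i i = 0) (i : V) :
    W.supportGraph.degree i = #{j | W i j ≠ 0} := by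
  rw [← SimpleGraph.card_neighborFinset_eq_degree, SimpleGraph.neighborFinset_eq_filter]
  refine congrArg card (filter_congr fun j _ => ?_)
  rw [supportGraph_adj hW, and_iff_right_iff_imp]
  rintro hij rfl
  exact hij (hdiag i)

end supportGraph

variable [Fintype V] [DecidableEq V]

def laplacian [AddCommGroup R] (W : Matrix V V R) : Matrix V V R :=
  diagonal (fun i => ∑ j, W i j) - W

section AddCommGroup

variable [AddCommGroup R] {W : Matrix V V R}

theorem sum_laplacian_apply_eq_zero (hW : W.IsSymm) {S : Finset V}
    (hS : ∀ i k, W i k ≠ 0 → (i ∈ S ↔ k ∈ S)) (k : V) :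
    ∑ i ∈ S, W.laplacian i k = 0 := by
  simp only [laplacian, sub_apply, diagonal_apply, sum_sub_distrib, sum_ite_eq']
  split_ifs with hk
  · rw [sub_eq_zero]
    calc ∑ j, W k j = ∑ i, W i k := sum_congr rfl fun i _ => hW.apply i k
      _ = ∑ i ∈ S, W i k := (sum_subset (subset_univ S) fun i _ hi =>
          not_ne_iff.mp fun h => hi ((hS i k h).mpr hk)).symm
  · rw [zero_sub, neg_eq_zero]
    exact sum_eq_zero fun i hi => not_ne_iff.mp fun h => hk ((hS i k h).mp hi)

end AddCommGroup

section Ring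

variable [NonUnitalNonAssocRing R] {W : Matrix V V R}

theorem sum_laplacian_mul_apply_eq_zero (hW : W.IsSymm) {S : Finset V}
    (hS : ∀ i k, W i k ≠ 0 → (i ∈ S ↔ k ∈ S)) (D : Matrix V V R) (j : V) :
    ∑ i ∈ S, (W.laplacian * D) i j = 0 := by
  simp only [mul_apply]
  rw [sum_comm]
  exact sum_eq_zero fun k _ => by rw [← sum_mul, sum_laplacian_apply_eq_zero hW hS, zero_mul]

theorem laplacian_mul_apply_self {D : Matrix V V R} {i : V} (hD : D i i = 0) :
    (W.laplacian * D) i i = -∑ k, W i k * D k i := by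
  simp [laplacian, mul_apply, sub_mul, diagonal_apply, hD]

end Ring

section CommRing

variable [CommRing R]

def laplacianResidual (W D : Matrix V V R) (d : V → R) : Matrix V V R :=
  W.laplacian * D + (2 : R) • (1 : Matrix V V R) - vecMulVec (fun i => 2 - d i) (fun _ => (1 : R))

variable {W D : Matrix V V R} {d : V → R}

theorem sum_laplacianResidual_apply (hW : W.IsSymm) {S : Finset V}
    (hS : ∀ i k, W i k ≠ 0 → (i ∈ S ↔ k ∈ S)) (j : V) :
    ∑ i ∈ S, laplacianResidual W D d i j = (if j ∈ S then 2 else 0) - ∑ i ∈ S, (2 - d i) := by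
  simp [laplacianResidual, sum_sub_distrib, sum_add_distrib,
    sum_laplacian_mul_apply_eq_zero hW hS, one_apply, vecMulVec_apply]

theorem laplacianResidual_apply_self {i : V} (hD : D i i = 0) :
    laplacianResidual W D d i i = d i - ∑ k, W i k * D k i := by
  simp [laplacianResidual, laplacian_mul_apply_self hD, vecMulVec_apply]
  ring

theorem laplacianResidual_apply_self_of_mem {S : Finset V} {j : V} (hW : W.IsSymm)
    (hS : ∀ i k, W i k ≠ 0 → (i ∈ S ↔ k ∈ S)) (hcol : ∀ i ≠ j, laplacianResidual W D d i j = 0)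
    (hj : j ∈ S) :
    laplacianResidual W D d j j = 2 - ∑ i ∈ S, (2 - d i) := by
  rw [← sum_eq_single_of_mem j hj fun i _ hi => hcol i hi, sum_laplacianResidual_apply hW hS,
    if_pos hj]

theorem sum_two_sub_eq_zero_of_notMem {S : Finset V} {j : V} (hW : W.IsSymm)
    (hS : ∀ i k, W i k ≠ 0 → (i ∈ S ↔ k ∈ S)) (hcol : ∀ i ≠ j, laplacianResidual W D d i j = 0)
    (hj : j ∉ S) :
    ∑ i ∈ S, (2 - d i) = 0 := by
  have := sum_laplacianResidual_apply (D := D) (d := d) hW hS j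
  rw [sum_eq_zero fun i hi => hcol i (ne_of_mem_of_not_mem hi hj), if_neg hj] at this
  linear_combination this

end CommRing

theorem sum_eq_two_mul_card_sub_one_of_laplacianResidual_col_eq_zero
    {K : Type*} [Field K] [LinearOrder K] [IsStrictOrderedRing K]
    {W D : Matrix V V K} {d : V → K} (hW : W.IsSymm) (hnonneg : ∀ i j, 0 ≤ W i j)
    (hdiag : ∀ i, W i i = 0) (hd : ∀ i, d i = #{j | 0 < W i j}) {j : V} (hDj : D j j = 0)
    (hDW : ∀ k, 0 < W j k → 1 / W j k ≤ D k j)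
    (hcol : ∀ i ≠ j, laplacianResidual W D d i j = 0) :
    ∑ i, d i = 2 * (Fintype.card V - 1) := by
  classical
  set C := (W.supportGraph.connectedComponentMk j).supp.toFinset
  have hC (i k : V) (h : W i k ≠ 0) : i ∈ C ↔ k ∈ C := by
    simpa only [C, Set.mem_toFinset] using mem_supp_iff_of_apply_ne_zero _ h
  have hCc (i k : V) (h : W i k ≠ 0) : i ∈ Cᶜ ↔ k ∈ Cᶜ := by
    simpa only [mem_compl, not_iff_not] using hC i k h
  have hjC : j ∈ C := by simp [C]
  have hdeg (i : V) : d i = W.supportGraph.degree i := by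
    rw [hd, degree_supportGraph hW hdiag]
    exact congrArg (fun s => ((#s : ℕ) : K)) (filter_congr fun k _ => (hnonneg i k).lt_iff_ne')
  have hres_nonpos : laplacianResidual W D d j j ≤ 0 := by
    rw [laplacianResidual_apply_self hDj, hd, sub_nonpos]
    exact card_filter_pos_le_sum_mul (hnonneg j) hDW
  have hconn : 2 * (#C : K) ≤ ∑ i ∈ C, d i + 2 := by
    simp only [hdeg]
    exact_mod_cast (W.supportGraph.connectedComponentMk j).two_mul_card_supp_le_sum_degree_add_two
  have hres := laplacianResidual_apply_self_of_mem hW hC hcol hjC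
  have hrest := sum_two_sub_eq_zero_of_notMem hW hCc hcol (by simpa using hjC)
  have hcard : (#C : K) + #Cᶜ = Fintype.card V := by exact_mod_cast card_add_card_compl C
  rw [← sum_add_sum_compl C]
  simp only [sum_sub_distrib, sum_const, nsmul_eq_mul] at hres hrest
  linarith

end Matrix

theorem upper_triangular_identity_degree_sum_general {n : ℕ} (hn : 1 ≤ n)
    (W : Matrix (Fin n) (Fin n) ℝ)
    (hsymm : W.IsSymm) (hnonneg : ∀ i j, 0 ≤ W i j) (hdiag : ∀ i, W i i = 0)
    (L : Matrix (Fin n) (Fin n) ℝ)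
    (hL : L = Matrix.diagonal (fun i => ∑ j, W i j) - W)
    (d : Fin n → ℝ)
    (hd : ∀ i, d i = ((Finset.univ.filter fun j => 0 < W i j).card : ℝ))
    (D : Matrix (Fin n) (Fin n) ℝ)
    (hDdiag : ∀ i, D i i = 0)
    (hDW : ∀ i j, 0 < W i j → 1 / W i j ≤ D i j)
    (hupper : ∀ i j : Fin n, i < j →
      ((L * D + (2 : ℝ) • (1 : Matrix (Fin n) (Fin n) ℝ) -
        Matrix.vecMulVec (fun i => 2 - d i) (fun _ => (1 : ℝ)) :
        Matrix (Fin n) (Fin n) ℝ)) i j = 0) :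
    ∑ i, d i = 2 * ((n : ℝ) - 1) := by
  obtain ⟨m, rfl⟩ : ∃ m, n = m + 1 := ⟨n - 1, by omega⟩
  subst hL
  have hDW_col (k : Fin (m + 1)) (hk : 0 < W (Fin.last m) k) :
      1 / W (Fin.last m) k ≤ D k (Fin.last m) := by
    rw [← hsymm.apply] at hk ⊢
    exact hDW _ _ hk
  have hcol (i : Fin (m + 1)) (hi : i ≠ Fin.last m) :
      laplacianResidual W D d i (Fin.last m) = 0 :=
    hupper _ _ ((Fin.le_last i).lt_of_ne hi)
  rw [sum_eq_two_mul_card_sub_one_of_laplacianResidual_col_eq_zero hsymm hnonneg hdiag hd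
    (hDdiag _) hDW_col hcol, Fintype.card_fin]

/-- If a symmetric zero-diagonal nonnegative matrix `D` dominates the reciprocal weight
matrix entrywise and the upper-triangular part of the identity
`L·D + 2·I = (2·1 − d)·1ᵀ` holds, then the degrees sum to `2(n − 1)`. -/
theorem upper_triangular_identity_degree_sum {n : ℕ} (hn : 1 ≤ n)
    (W : Matrix (Fin n) (Fin n) ℝ)
    (hsymm : W.IsSymm) (hnonneg : ∀ i j, 0 ≤ W i j) (hdiag : ∀ i, W i i = 0)
    (L : Matrix (Fin n) (Fin n) ℝ)
    (hL : L = Matrix.diagonal (fun i => ∑ j, W i j) - W)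
    (d : Fin n → ℝ)
    (hd : ∀ i, d i = ((Finset.univ.filter fun j => 0 < W i j).card : ℝ))
    (D : Matrix (Fin n) (Fin n) ℝ)
    (hDsymm : D.IsSymm) (hDdiag : ∀ i, D i i = 0) (hDnonneg : ∀ i j, 0 ≤ D i j)
    (hDW : ∀ i j, 0 < W i j → 1 / W i j ≤ D i j)
    (hupper : ∀ i j : Fin n, i < j →
      ((L * D + (2 : ℝ) • (1 : Matrix (Fin n) (Fin n) ℝ) -
        Matrix.vecMulVec (fun i => 2 - d i) (fun _ => (1 : ℝ)) :
        Matrix (Fin n) (Fin n) ℝ)) i j = 0) :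
    ∑ i, d i = 2 * ((n : ℝ) - 1) :=
  upper_triangular_identity_degree_sum_general hn W hsymm hnonneg hdiag L hL d hd D hDdiag hDW
    hupper
end
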